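/- arXiv:1208.2785 — 9 statements merged into one kernel-verified Lean document; each statement's English description precedes it below -/
import Mathlib

section
/- For every integer d ≥ 1 and every finite set P of n points in ℝ^d, there exists a point p ∈ P such that every axis-parallel box B in ℝ^d with |B ∩ P| > ((2d−1)/(2d))·n contains p. (Equivalently, some point of P is a strong ((2d−1)/(2d))-centerpoint of P with respect to axis-parallel boxes.) -/
/-!
Call a point `p ∈ P` *shallow* in coordinate `i` if fewer than `n / (2d)` points of `P` have
`i`-th coordinate `≤ p i` (or fewer than `n / (2d)` have it `≥ p i`). The points that are shallow
below in coordinate `i` all lie weakly below the highest of them, so there are fewer than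
`n / (2d)` of them; hence fewer than `2d · n / (2d) = n` points are shallow at all, and some
`p ∈ P` is deep in every coordinate. A box missing `p` misses, for some `i`, all points of `P`
weakly on one side of `p` in coordinate `i`, so it contains at most `n - n / (2d)` points.
-/

open Finset

/-- An axis-parallel box in ℝ^d: a product of closed intervals. -/
def IsBox {d : ℕ} (B : Set (EuclideanSpace ℝ (Fin d))) : Prop :=
  ∃ a b : Fin d → ℝ, B = {x | ∀ i, a i ≤ x i ∧ x i ≤ b i}

section Depth

variable {α β : Type*} [LinearOrder β]

theorem card_filter_card_filter_le_lt (s : Finset α) (f : α → β) {c : ℝ} (hc : 0 < c) :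
    (#{q ∈ s | (#{r ∈ s | f r ≤ f q} : ℝ) < c} : ℝ) < c := by
  set L := {q ∈ s | (#{r ∈ s | f r ≤ f q} : ℝ) < c}
  rcases L.eq_empty_or_nonempty with hL | hL
  · simpa [hL] using hc
  obtain ⟨q, hq, hmax⟩ := L.exists_max_image f hL
  have hsub : L ⊆ {r ∈ s | f r ≤ f q} := fun r hr =>
    mem_filter.2 ⟨(mem_filter.1 hr).1, hmax r hr⟩
  calc (#L : ℝ) ≤ #{r ∈ s | f r ≤ f q} := by exact_mod_cast card_le_card hsub
    _ < c := (mem_filter.1 hq).2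

theorem card_filter_card_filter_ge_lt (s : Finset α) (f : α → β) {c : ℝ} (hc : 0 < c) :
    (#{q ∈ s | (#{r ∈ s | f q ≤ f r} : ℝ) < c} : ℝ) < c :=
  card_filter_card_filter_le_lt (β := βᵒᵈ) s (fun q => OrderDual.toDual (f q)) hc

theorem exists_mem_forall_le_card_filter_le_and_ge {ι : Type*} [Fintype ι] [Nonempty ι]
    (s : Finset α) (hs : s.Nonempty) (f : ι → α → β) :
    ∃ p ∈ s, ∀ i, (#s : ℝ) / (2 * Fintype.card ι) ≤ #{r ∈ s | f i r ≤ f i p} ∧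
      (#s : ℝ) / (2 * Fintype.card ι) ≤ #{r ∈ s | f i p ≤ f i r} := by
  classical
  set c : ℝ := #s / (2 * Fintype.card ι)
  have hc : 0 < c := by have := hs.card_pos; positivity
  set shallowBelow : ι → Finset α := fun i => {q ∈ s | (#{r ∈ s | f i r ≤ f i q} : ℝ) < c}
  set shallowAbove : ι → Finset α := fun i => {q ∈ s | (#{r ∈ s | f i q ≤ f i r} : ℝ) < c}
  set shallow : ι → Finset α := fun i => shallowBelow i ∪ shallowAbove i
  have hshallow : ∀ i, (#(shallow i) : ℝ) < 2 * c := fun i => by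
    calc (#(shallow i) : ℝ) ≤ #(shallowBelow i) + #(shallowAbove i) := by
          exact_mod_cast card_union_le _ _
      _ < c + c := add_lt_add (card_filter_card_filter_le_lt s (f i) hc)
          (card_filter_card_filter_ge_lt s (f i) hc)
      _ = 2 * c := by ring
  have hbad : (#(univ.biUnion shallow) : ℝ) < #s := by
    calc (#(univ.biUnion shallow) : ℝ) ≤ ∑ i, (#(shallow i) : ℝ) := by
          exact_mod_cast card_biUnion_le
      _ < ∑ _i : ι, 2 * c := sum_lt_sum_of_nonempty univ_nonempty fun i _ => hshallow i
      _ = #s := by simp only [sum_const, card_univ, nsmul_eq_mul, c]; field_simp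
  obtain ⟨p, hp, hp_deep⟩ := exists_mem_notMem_of_card_lt_card (by exact_mod_cast hbad)
  refine ⟨p, hp, fun i => ?_⟩
  simp only [mem_biUnion, mem_univ, true_and, not_exists, shallow, shallowBelow, shallowAbove,
    mem_union, mem_filter, not_or, not_and, not_lt] at hp_deep
  exact ⟨(hp_deep i).1 hp, (hp_deep i).2 hp⟩

end Depth

theorem ncard_inter_add_card_le {α : Type*} [DecidableEq α] {B : Set α} {P S : Finset α}
    (hS : S ⊆ P) (hdisj : ∀ x ∈ S, x ∉ B) : (B ∩ ↑P).ncard + #S ≤ #P := by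
  have hsub : B ∩ ↑P ⊆ ↑(P \ S) := fun x ⟨hxB, hxP⟩ =>
    mem_sdiff.2 ⟨hxP, fun hxS => hdisj x hxS hxB⟩
  calc (B ∩ ↑P).ncard + #S ≤ #(P \ S) + #S := by
        gcongr
        exact (Set.ncard_le_ncard hsub (P \ S).finite_toSet).trans_eq (Set.ncard_coe_finset _)
    _ = #P := card_sdiff_add_card_eq_card hS

theorem IsBox.exists_coord_side_disjoint {d : ℕ} {B : Set (EuclideanSpace ℝ (Fin d))}
    (hB : IsBox B) {p : EuclideanSpace ℝ (Fin d)} (hp : p ∉ B) :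
    ∃ i, (∀ x, x i ≤ p i → x ∉ B) ∨ (∀ x, p i ≤ x i → x ∉ B) := by
  obtain ⟨a, b, rfl⟩ := hB
  obtain ⟨i, hi⟩ : ∃ i, p i < a i ∨ b i < p i := by
    simpa [or_iff_not_imp_left] using hp
  refine ⟨i, hi.imp (fun hi x hx hxB => ?_) (fun hi x hx hxB => ?_)⟩
  · linarith [(hxB i).1]
  · linarith [(hxB i).2]

/-- Strong centerpoint for axis-parallel boxes in ℝ^d: some point of `P` lies in every
axis-parallel box containing more than a `(2d-1)/(2d)` fraction of the points of `P`. -/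
theorem strong_centerpoint_boxes (d : ℕ) (hd : 1 ≤ d)
    (P : Finset (EuclideanSpace ℝ (Fin d))) (hP : P.Nonempty) :
    ∃ p ∈ P, ∀ B : Set (EuclideanSpace ℝ (Fin d)), IsBox B →
      ((2 * (d : ℝ) - 1) / (2 * d)) * P.card < ((B ∩ ↑P).ncard : ℝ) → p ∈ B := by
  have : Nonempty (Fin d) := ⟨⟨0, hd⟩⟩
  obtain ⟨p, hp, hdeep⟩ := exists_mem_forall_le_card_filter_le_and_ge P hP (fun i x => x i)
  simp only [Fintype.card_fin] at hdeep
  refine ⟨p, hp, fun B hB hcard => ?_⟩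
  by_contra hpB
  obtain ⟨S, hSP, hSB, hS⟩ : ∃ S ⊆ P, (∀ x ∈ S, x ∉ B) ∧ (#P : ℝ) / (2 * d) ≤ #S := by
    obtain ⟨i, hi | hi⟩ := hB.exists_coord_side_disjoint hpB
    · exact ⟨_, filter_subset _ _, fun x hx => hi x (mem_filter.1 hx).2, (hdeep i).1⟩
    · exact ⟨_, filter_subset _ _, fun x hx => hi x (mem_filter.1 hx).2, (hdeep i).2⟩
  have hle : ((B ∩ ↑P).ncard : ℝ) + #S ≤ #P := by
    exact_mod_cast ncard_inter_add_card_le hSP hSB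
  have hfrac : (2 * (d : ℝ) - 1) / (2 * d) * #P = #P - #P / (2 * d) := by field_simp
  linarith
end

section
/- For every integer d ≥ 1 and every integer k ≥ 1, there exists a finite set P ⊂ ℝ^d with |P| = 2dk points such that for every point p ∈ P there exists an axis-parallel box B in ℝ^d with p ∉ B and |B ∩ P| ≥ (2d−1)k, i.e., B contains at least a ((2d−1)/(2d))-fraction of the points of P while avoiding p. Hence the constant (2d−1)/(2d) in the strong centerpoint theorem for axis-parallel boxes is tight. -/
theorem Finset.card_sub_card_le_ncard_inter {α : Type*} [DecidableEq α] {s t : Finset α}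
    {B : Set α} (h : ↑(s \ t) ⊆ B) : s.card - t.card ≤ (B ∩ ↑s).ncard :=
  calc s.card - t.card ≤ (s \ t).card := Finset.le_card_sdiff t s
    _ = (↑(s \ t) : Set α).ncard := (Set.ncard_coe_finset _).symm
    _ ≤ (B ∩ ↑s).ncard :=
      Set.ncard_le_ncard (Set.subset_inter h (by simp)) (s.finite_toSet.inter_of_right B)

theorem EuclideanSpace.eq_and_eq_of_single_eq_single {ι 𝕜 : Type*} [RCLike 𝕜] [DecidableEq ι]
    {i i' : ι} {a a' : 𝕜} (ha : a ≠ 0) (h : single i a = single i' a') : i = i' ∧ a = a' := by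
  have hi := congrArg (· i) h
  simp only [PiLp.single_apply] at hi
  by_cases hii' : i = i'
  · subst hii'
    simpa using hi
  · simp [hii', ha] at hi

section HalfAxes

variable {d : ℕ}

/-- The point at distance `t` from the origin on the `i`-th coordinate axis, on its positive
half if `s` and on its negative half otherwise. -/
noncomputable def halfAxisPoint (i : Fin d) (s : Bool) (t : ℝ) : EuclideanSpace ℝ (Fin d) :=
  EuclideanSpace.single i (if s then t else -t)

/-- The cube `[-r, r]^d` with its `i`-th side cut down to the half opposite to `s`. -/
def avoidingBox (r : ℝ) (i : Fin d) (s : Bool) : Set (EuclideanSpace ℝ (Fin d)) :=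
  {x | ∀ l, (if l = i ∧ s = false then 0 else -r) ≤ x l ∧
    x l ≤ (if l = i ∧ s = true then 0 else r)}

theorem isBox_avoidingBox (r : ℝ) (i : Fin d) (s : Bool) : IsBox (avoidingBox r i s) :=
  ⟨_, _, rfl⟩

theorem halfAxisPoint_inj {i i' : Fin d} {s s' : Bool} {t t' : ℝ} (ht : 0 < t) (ht' : 0 < t')
    (h : halfAxisPoint i s t = halfAxisPoint i' s' t') : i = i' ∧ s = s' ∧ t = t' := by
  obtain ⟨rfl, hv⟩ := EuclideanSpace.eq_and_eq_of_single_eq_single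
    (by split <;> linarith) h
  cases s <;> cases s' <;> simp only [if_true, Bool.false_eq_true, if_false] at hv <;>
    first | exact ⟨rfl, rfl, by linarith⟩ | exact absurd hv (by linarith)

theorem halfAxisPoint_notMem_avoidingBox {t : ℝ} (ht : 0 < t) (r : ℝ) (i : Fin d) (s : Bool) :
    halfAxisPoint i s t ∉ avoidingBox r i s := fun hmem => by
  have hi := hmem i
  cases s <;> simp [halfAxisPoint] at hi <;> linarith

theorem halfAxisPoint_mem_avoidingBox {t r : ℝ} (ht : 0 ≤ t) (htr : t ≤ r) {i i' : Fin d}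
    {s s' : Bool} (h : ¬(i' = i ∧ s' = s)) : halfAxisPoint i' s' t ∈ avoidingBox r i s := by
  intro l
  simp only [halfAxisPoint, PiLp.single_apply]
  by_cases hl : l = i' <;> by_cases hli : l = i <;> cases s <;> cases s' <;>
    simp_all <;> linarith

noncomputable def halfAxisRay (k : ℕ) (i : Fin d) (s : Bool) : Finset (EuclideanSpace ℝ (Fin d)) :=
  Finset.univ.image fun j : Fin k => halfAxisPoint i s (j + 1)

theorem card_halfAxisRay_le (k : ℕ) (i : Fin d) (s : Bool) : (halfAxisRay k i s).card ≤ k :=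
  Finset.card_image_le.trans_eq (Finset.card_fin k)

noncomputable def halfAxesConfiguration (d k : ℕ) : Finset (EuclideanSpace ℝ (Fin d)) :=
  Finset.univ.image fun q : Fin d × Bool × Fin k => halfAxisPoint q.1 q.2.1 (q.2.2 + 1)

theorem card_halfAxesConfiguration (d k : ℕ) : (halfAxesConfiguration d k).card = 2 * d * k := by
  rw [halfAxesConfiguration, Finset.card_image_of_injective]
  · simp [Fintype.card_prod]
    ring
  · rintro ⟨i, s, j⟩ ⟨i', s', j'⟩ h
    obtain ⟨rfl, rfl, hj⟩ := halfAxisPoint_inj (by positivity) (by positivity) h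
    simp only [add_left_inj, Nat.cast_inj, Fin.val_inj] at hj
    rw [hj]

theorem halfAxesConfiguration_sdiff_subset_avoidingBox (d k : ℕ) (i : Fin d) (s : Bool) :
    ↑(halfAxesConfiguration d k \ halfAxisRay k i s) ⊆ avoidingBox k i s := by
  intro x hx
  simp only [halfAxesConfiguration, halfAxisRay, Finset.coe_sdiff, Finset.coe_image, Finset.coe_univ,
    Set.image_univ, Set.mem_sdiff, Set.mem_range, Prod.exists, not_exists] at hx
  obtain ⟨⟨i', s', j, rfl⟩, hray⟩ := hx
  refine halfAxisPoint_mem_avoidingBox (by positivity) ?_ fun ⟨hi, hs⟩ => hray j ?_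
  · exact_mod_cast j.isLt
  · rw [hi, hs]

end HalfAxes

theorem strong_centerpoint_boxes_tight_general (d k : ℕ) :
    ∃ P : Finset (EuclideanSpace ℝ (Fin d)), P.card = 2 * d * k ∧
      ∀ p ∈ P, ∃ B : Set (EuclideanSpace ℝ (Fin d)), IsBox B ∧ p ∉ B ∧
        (2 * d - 1) * k ≤ (B ∩ ↑P).ncard := by
  refine ⟨halfAxesConfiguration d k, card_halfAxesConfiguration d k, fun p hp => ?_⟩
  obtain ⟨⟨i, s, j⟩, -, rfl⟩ := Finset.mem_image.mp hp
  refine ⟨avoidingBox k i s, isBox_avoidingBox _ i s,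
    halfAxisPoint_notMem_avoidingBox (by positivity) _ i s, ?_⟩
  calc (2 * d - 1) * k
      = (halfAxesConfiguration d k).card - k := by
        rw [card_halfAxesConfiguration, Nat.sub_mul, one_mul]
    _ ≤ (halfAxesConfiguration d k).card - (halfAxisRay k i s).card :=
        Nat.sub_le_sub_left (card_halfAxisRay_le k i s) _
    _ ≤ _ := Finset.card_sub_card_le_ncard_inter
        (halfAxesConfiguration_sdiff_subset_avoidingBox d k i s)

/-- Tightness of the strong centerpoint bound for axis-parallel boxes: there is a set of
`2dk` points such that every point of it is avoided by some axis-parallel box containing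
at least `(2d-1)k` of the points. -/
theorem strong_centerpoint_boxes_tight (d k : ℕ) (hd : 1 ≤ d) (hk : 1 ≤ k) :
    ∃ P : Finset (EuclideanSpace ℝ (Fin d)), P.card = 2 * d * k ∧
      ∀ p ∈ P, ∃ B : Set (EuclideanSpace ℝ (Fin d)), IsBox B ∧ p ∉ B ∧
        (2 * d - 1) * k ≤ (B ∩ ↑P).ncard :=
  strong_centerpoint_boxes_tight_general d k
end

section
/- For every finite set P of n points in ℝ², there exists a subset Q ⊆ P with |Q| ≤ 4 such that every axis-parallel rectangle R with |R ∩ P| > (1/2)·n contains a point of Q. In other words, every finite planar point set admits a strong (1/2)-net of size 4 with respect to axis-parallel rectangles. -/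
open scoped Classical

/-- An axis-parallel rectangle in ℝ²: a product of closed intervals. -/
def IsRect (R : Set (EuclideanSpace ℝ (Fin 2))) : Prop :=
  ∃ a b c d : ℝ, R = {x | a ≤ x 0 ∧ x 0 ≤ b ∧ c ≤ x 1 ∧ x 1 ≤ d}

/-- Minimal threshold (quantile) lemma: if some cut captures more than `k` elements,
there is a least such cut value. -/
lemma net_min_cut {α : Type*} (S : Finset α) (g : α → ℝ) (k : ℕ)
    (h : ∃ b : ℝ, k < (S.filter fun p => g p ≤ b).card) :
    ∃ m : ℝ, (k < (S.filter fun p => g p ≤ m).card) ∧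
      ∀ b : ℝ, k < (S.filter fun p => g p ≤ b).card → m ≤ b := by
  classical
  have key : ∀ b : ℝ, k < (S.filter fun p => g p ≤ b).card →
      ∃ v ∈ (S.image g).filter (fun v => k < (S.filter fun p => g p ≤ v).card), v ≤ b := by
    intro b hb
    have hFne : (S.filter fun p => g p ≤ b).Nonempty :=
      Finset.card_pos.mp (lt_of_le_of_lt (Nat.zero_le k) hb)
    have hFimg : ((S.filter fun p => g p ≤ b).image g).Nonempty := hFne.image g
    set v := ((S.filter fun p => g p ≤ b).image g).max' hFimg with hv
    obtain ⟨p0, hp0, hp0v⟩ := Finset.mem_image.mp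
      (((S.filter fun p => g p ≤ b).image g).max'_mem hFimg)
    have hvb : v ≤ b := by rw [hv, ← hp0v]; exact (Finset.mem_filter.mp hp0).2
    have hvS : v ∈ S.image g :=
      Finset.mem_image.mpr ⟨p0, (Finset.mem_filter.mp hp0).1, hp0v⟩
    have hsub : (S.filter fun p => g p ≤ b) ⊆ S.filter fun p => g p ≤ v := by
      intro p hp
      refine Finset.mem_filter.mpr ⟨(Finset.mem_filter.mp hp).1, ?_⟩
      exact Finset.le_max' _ _ (Finset.mem_image.mpr ⟨p, hp, rfl⟩)
    exact ⟨v, Finset.mem_filter.mpr ⟨hvS, lt_of_lt_of_le hb (Finset.card_le_card hsub)⟩, hvb⟩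
  obtain ⟨b₀, hb₀⟩ := h
  obtain ⟨v₀, hv₀, _⟩ := key b₀ hb₀
  have hTne : ((S.image g).filter (fun v => k < (S.filter fun p => g p ≤ v).card)).Nonempty :=
    ⟨v₀, hv₀⟩
  refine ⟨((S.image g).filter (fun v => k < (S.filter fun p => g p ≤ v).card)).min' hTne, ?_, ?_⟩
  · exact (Finset.mem_filter.mp (Finset.min'_mem _ hTne)).2
  · intro b hb
    obtain ⟨v, hvT, hvb⟩ := key b hb
    exact le_trans (Finset.min'_le _ _ hvT) hvb

/-- Strong centerpoint for two-parameter anchored ranges on a finite set. -/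
lemma net_center_point {α : Type*} (P S : Finset α) (hSP : S ⊆ P) (hP : P.Nonempty)
    (g₁ g₂ : α → ℝ) :
    ∃ z ∈ P, ∀ b d : ℝ,
      S.card < 2 * (S.filter fun p => g₁ p ≤ b ∧ g₂ p ≤ d).card →
      z ∈ S ∧ g₁ z ≤ b ∧ g₂ z ≤ d := by
  classical
  rcases S.eq_empty_or_nonempty with hS | hS
  · obtain ⟨p, hp⟩ := hP
    refine ⟨p, hp, ?_⟩
    intro b d hbd
    rw [hS] at hbd
    simp at hbd
  · have hm0 : 0 < S.card := Finset.card_pos.mpr hS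
    have hwit : ∀ g : α → ℝ, ∃ b : ℝ, S.card / 2 < (S.filter fun p => g p ≤ b).card := by
      intro g
      refine ⟨(S.image g).max' (hS.image g), ?_⟩
      have hsub : S ⊆ S.filter fun p => g p ≤ (S.image g).max' (hS.image g) := by
        intro p hp
        exact Finset.mem_filter.mpr ⟨hp, Finset.le_max' _ _ (Finset.mem_image_of_mem g hp)⟩
      have hcl := Finset.card_le_card hsub
      omega
    obtain ⟨m₁, hb1, hb2⟩ := net_min_cut S g₁ (S.card / 2) (hwit g₁)
    obtain ⟨m₂, hd1, hd2⟩ := net_min_cut S g₂ (S.card / 2) (hwit g₂)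
    have hAB : ((S.filter fun p => g₁ p ≤ m₁) ∩ (S.filter fun p => g₂ p ≤ m₂)).Nonempty := by
      have h1 := Finset.card_union_add_card_inter (S.filter fun p => g₁ p ≤ m₁)
        (S.filter fun p => g₂ p ≤ m₂)
      have h2 : ((S.filter fun p => g₁ p ≤ m₁) ∪ (S.filter fun p => g₂ p ≤ m₂)).card ≤ S.card := by
        refine Finset.card_le_card ?_
        intro p hp
        rcases Finset.mem_union.mp hp with h | h <;> exact (Finset.mem_filter.mp h).1
      have h3 : 0 < ((S.filter fun p => g₁ p ≤ m₁) ∩ (S.filter fun p => g₂ p ≤ m₂)).card := by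
        omega
      exact Finset.card_pos.mp h3
    obtain ⟨z, hz⟩ := hAB
    have hzA := Finset.mem_filter.mp (Finset.mem_inter.mp hz).1
    have hzB := Finset.mem_filter.mp (Finset.mem_inter.mp hz).2
    refine ⟨z, hSP hzA.1, ?_⟩
    intro b d hbd
    have hcb : m₁ ≤ b := by
      apply hb2
      have hsub : (S.filter fun p => g₁ p ≤ b ∧ g₂ p ≤ d) ⊆ S.filter fun p => g₁ p ≤ b := by
        intro p hp
        have h := Finset.mem_filter.mp hp
        exact Finset.mem_filter.mpr ⟨h.1, h.2.1⟩
      have := Finset.card_le_card hsub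
      omega
    have hcd : m₂ ≤ d := by
      apply hd2
      have hsub : (S.filter fun p => g₁ p ≤ b ∧ g₂ p ≤ d) ⊆ S.filter fun p => g₂ p ≤ d := by
        intro p hp
        have h := Finset.mem_filter.mp hp
        exact Finset.mem_filter.mpr ⟨h.1, h.2.2⟩
      have := Finset.card_le_card hsub
      omega
    exact ⟨hzA.1, le_trans hzA.2 hcb, le_trans hzB.2 hcd⟩


lemma net_arith1 {n f c : ℕ} (h1 : f ≤ c) (h2 : n < 2 * f) : (n - 1) / 2 < c := by omega

lemma net_arith2 {n f A B : ℕ} (h1 : A + B = n) (h3 : (n - 1) / 2 < A) (h2 : f ≤ B)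
    (h4 : n < 2 * f) : False := by omega

lemma net_arith3 {s b1 b2 a1 a4 a2 a3 : ℕ} (hx : b1 + b2 = s) (hy1 : a1 + a4 = b1)
    (hy2 : a2 + a3 = b2) : s = a1 + a2 + a3 + a4 := by omega

lemma net_arith4 {n f q1 q2 q3 q4 f1 f2 f3 f4 : ℕ} (h1 : n = q1 + q2 + q3 + q4)
    (h2 : f = f1 + f2 + f3 + f4) (h3 : n < 2 * f) :
    q1 < 2 * f1 ∨ q2 < 2 * f2 ∨ q3 < 2 * f3 ∨ q4 < 2 * f4 := by omega

/-- Every finite planar point set admits a strong (1/2)-net of size 4 with respect to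
axis-parallel rectangles. -/
theorem strong_one_half_net_size_four (P : Finset (EuclideanSpace ℝ (Fin 2))) :
    ∃ Q : Finset (EuclideanSpace ℝ (Fin 2)), Q ⊆ P ∧ Q.card ≤ 4 ∧
      ∀ R : Set (EuclideanSpace ℝ (Fin 2)), IsRect R →
        (1 / 2 : ℝ) * P.card < ((R ∩ ↑P).ncard : ℝ) → ∃ q ∈ Q, q ∈ R := by
  classical
  rcases P.eq_empty_or_nonempty with hPe | hP
  · refine ⟨∅, Finset.empty_subset _, by simp, ?_⟩
    intro R _ hcard
    exfalso
    rw [hPe] at hcard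
    simp at hcard
  · have hn0 : 0 < P.card := Finset.card_pos.mpr hP
    have hwit : ∀ g : (EuclideanSpace ℝ (Fin 2)) → ℝ,
        ∃ b : ℝ, (P.card - 1) / 2 < (P.filter fun p => g p ≤ b).card := by
      intro g
      refine ⟨(P.image g).max' (hP.image g), ?_⟩
      have hsub : P ⊆ P.filter fun p => g p ≤ (P.image g).max' (hP.image g) := by
        intro p hp
        exact Finset.mem_filter.mpr ⟨hp, Finset.le_max' _ _ (Finset.mem_image_of_mem g hp)⟩
      have hcl := Finset.card_le_card hsub
      omega
    obtain ⟨mx, hmx1, hmx2⟩ := net_min_cut P (fun p => p 0) ((P.card - 1) / 2) (hwit _)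
    obtain ⟨my, hmy1, hmy2⟩ := net_min_cut P (fun p => p 1) ((P.card - 1) / 2) (hwit _)
    obtain ⟨z1, hz1P, hz1⟩ := net_center_point P (P.filter fun p => mx < p 0 ∧ my < p 1)
      (Finset.filter_subset _ _) hP (fun p => p 0) (fun p => p 1)
    obtain ⟨z2, hz2P, hz2⟩ := net_center_point P (P.filter fun p => p 0 ≤ mx ∧ my < p 1)
      (Finset.filter_subset _ _) hP (fun p => -(p 0)) (fun p => p 1)
    obtain ⟨z3, hz3P, hz3⟩ := net_center_point P (P.filter fun p => p 0 ≤ mx ∧ p 1 ≤ my)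
      (Finset.filter_subset _ _) hP (fun p => -(p 0)) (fun p => -(p 1))
    obtain ⟨z4, hz4P, hz4⟩ := net_center_point P (P.filter fun p => mx < p 0 ∧ p 1 ≤ my)
      (Finset.filter_subset _ _) hP (fun p => p 0) (fun p => -(p 1))
    have hmx1' : (P.card - 1) / 2 < (P.filter fun p => p 0 ≤ mx).card := hmx1
    have hmx2' : ∀ b : ℝ, (P.card - 1) / 2 < (P.filter fun p => p 0 ≤ b).card → mx ≤ b := hmx2
    have hmy1' : (P.card - 1) / 2 < (P.filter fun p => p 1 ≤ my).card := hmy1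
    have hmy2' : ∀ b : ℝ, (P.card - 1) / 2 < (P.filter fun p => p 1 ≤ b).card → my ≤ b := hmy2
    have hz1' : ∀ b d : ℝ,
        (P.filter fun p => mx < p 0 ∧ my < p 1).card <
          2 * ((P.filter fun p => mx < p 0 ∧ my < p 1).filter fun p => p 0 ≤ b ∧ p 1 ≤ d).card →
        z1 ∈ P.filter (fun p => mx < p 0 ∧ my < p 1) ∧ z1 0 ≤ b ∧ z1 1 ≤ d := hz1
    have hz2' : ∀ b d : ℝ,
        (P.filter fun p => p 0 ≤ mx ∧ my < p 1).card <
          2 * ((P.filter fun p => p 0 ≤ mx ∧ my < p 1).filter fun p => -(p 0) ≤ b ∧ p 1 ≤ d).card →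
        z2 ∈ P.filter (fun p => p 0 ≤ mx ∧ my < p 1) ∧ -(z2 0) ≤ b ∧ z2 1 ≤ d := hz2
    have hz3' : ∀ b d : ℝ,
        (P.filter fun p => p 0 ≤ mx ∧ p 1 ≤ my).card <
          2 * ((P.filter fun p => p 0 ≤ mx ∧ p 1 ≤ my).filter fun p => -(p 0) ≤ b ∧ -(p 1) ≤ d).card →
        z3 ∈ P.filter (fun p => p 0 ≤ mx ∧ p 1 ≤ my) ∧ -(z3 0) ≤ b ∧ -(z3 1) ≤ d := hz3
    have hz4' : ∀ b d : ℝ,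
        (P.filter fun p => mx < p 0 ∧ p 1 ≤ my).card <
          2 * ((P.filter fun p => mx < p 0 ∧ p 1 ≤ my).filter fun p => p 0 ≤ b ∧ -(p 1) ≤ d).card →
        z4 ∈ P.filter (fun p => mx < p 0 ∧ p 1 ≤ my) ∧ z4 0 ≤ b ∧ -(z4 1) ≤ d := hz4
    clear hmx1 hmx2 hmy1 hmy2 hz1 hz2 hz3 hz4
    refine ⟨{z1, z2, z3, z4}, ?_, ?_, ?_⟩
    · intro q hq
      simp only [Finset.mem_insert, Finset.mem_singleton] at hq
      rcases hq with rfl | rfl | rfl | rfl <;> assumption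
    · have h4 := Finset.card_insert_le z1 ({z2, z3, z4} : Finset _)
      have h3 := Finset.card_insert_le z2 ({z3, z4} : Finset _)
      have h2 := Finset.card_insert_le z3 ({z4} : Finset _)
      have h1 : ({z4} : Finset (EuclideanSpace ℝ (Fin 2))).card = 1 := Finset.card_singleton _
      clear * - h1 h2 h3 h4
      omega
    · rintro R ⟨a, b, c, d, rfl⟩ hcard
      obtain ⟨F, hF⟩ : ∃ F, F = P.filter (fun p => a ≤ p 0 ∧ p 0 ≤ b ∧ c ≤ p 1 ∧ p 1 ≤ d) :=
        ⟨_, rfl⟩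
      have hRP : {x : EuclideanSpace ℝ (Fin 2) | a ≤ x 0 ∧ x 0 ≤ b ∧ c ≤ x 1 ∧ x 1 ≤ d} ∩ ↑P
          = ↑F := by
        ext p
        rw [hF]
        simp only [Set.mem_inter_iff, Set.mem_setOf_eq, Finset.mem_coe, Finset.mem_filter]
        tauto
      rw [hRP, Set.ncard_coe_finset] at hcard
      have hcard' : P.card < 2 * F.card := by
        have hr : (P.card : ℝ) < 2 * (F.card : ℝ) := by linarith
        exact_mod_cast hr
      have hxb : mx ≤ b := by
        apply hmx2'
        have hsub : F ⊆ P.filter fun p => p 0 ≤ b := by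
          intro p hp
          rw [hF] at hp
          have h := Finset.mem_filter.mp hp
          exact Finset.mem_filter.mpr ⟨h.1, h.2.2.1⟩
        exact net_arith1 (Finset.card_le_card hsub) hcard'
      have hyd : my ≤ d := by
        apply hmy2'
        have hsub : F ⊆ P.filter fun p => p 1 ≤ d := by
          intro p hp
          rw [hF] at hp
          have h := Finset.mem_filter.mp hp
          exact Finset.mem_filter.mpr ⟨h.1, h.2.2.2.2⟩
        exact net_arith1 (Finset.card_le_card hsub) hcard'
      have hax : a ≤ mx := by
        by_contra hax
        push_neg at hax
        have hsub : F ⊆ P.filter (fun p => ¬ ((fun p : EuclideanSpace ℝ (Fin 2) => p 0) p ≤ mx)) := by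
          intro p hp
          rw [hF] at hp
          have h := Finset.mem_filter.mp hp
          refine Finset.mem_filter.mpr ⟨h.1, ?_⟩
          push_neg
          have := h.2.1
          linarith
        have h1 := Finset.card_filter_add_card_filter_not
          (s := P) (p := fun p : EuclideanSpace ℝ (Fin 2) => p 0 ≤ mx)
        exact net_arith2 h1 hmx1' (Finset.card_le_card hsub) hcard'
      have hcy : c ≤ my := by
        by_contra hcy
        push_neg at hcy
        have hsub : F ⊆ P.filter (fun p => ¬ ((fun p : EuclideanSpace ℝ (Fin 2) => p 1) p ≤ my)) := by
          intro p hp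
          rw [hF] at hp
          have h := Finset.mem_filter.mp hp
          refine Finset.mem_filter.mpr ⟨h.1, ?_⟩
          push_neg
          have := h.2.2.2.1
          linarith
        have h1 := Finset.card_filter_add_card_filter_not
          (s := P) (p := fun p : EuclideanSpace ℝ (Fin 2) => p 1 ≤ my)
        exact net_arith2 h1 hmy1' (Finset.card_le_card hsub) hcard'
      -- quadrant decomposition of cardinalities
      have key : ∀ S : Finset (EuclideanSpace ℝ (Fin 2)),
          S.card = (S.filter fun p => mx < p 0 ∧ my < p 1).card
            + (S.filter fun p => p 0 ≤ mx ∧ my < p 1).card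
            + (S.filter fun p => p 0 ≤ mx ∧ p 1 ≤ my).card
            + (S.filter fun p => mx < p 0 ∧ p 1 ≤ my).card := by
        intro S
        have hx := Finset.card_filter_add_card_filter_not
          (s := S) (p := fun p : EuclideanSpace ℝ (Fin 2) => mx < p 0)
        have hy1 := Finset.card_filter_add_card_filter_not
          (s := S.filter fun p : EuclideanSpace ℝ (Fin 2) => mx < p 0)
          (p := fun p : EuclideanSpace ℝ (Fin 2) => my < p 1)
        have hy2 := Finset.card_filter_add_card_filter_not
          (s := S.filter fun p : EuclideanSpace ℝ (Fin 2) => ¬ mx < p 0)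
          (p := fun p : EuclideanSpace ℝ (Fin 2) => my < p 1)
        rw [Finset.filter_filter, Finset.filter_filter] at hy1
        rw [Finset.filter_filter, Finset.filter_filter] at hy2
        have e1 : S.filter (fun p => ¬ mx < p 0 ∧ my < p 1)
            = S.filter (fun p => p 0 ≤ mx ∧ my < p 1) := by
          apply Finset.filter_congr
          intro p _
          simp [not_lt]
        have e2 : S.filter (fun p => ¬ mx < p 0 ∧ ¬ my < p 1)
            = S.filter (fun p => p 0 ≤ mx ∧ p 1 ≤ my) := by
          apply Finset.filter_congr
          intro p _
          simp [not_lt]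
        have e3 : S.filter (fun p => mx < p 0 ∧ ¬ my < p 1)
            = S.filter (fun p => mx < p 0 ∧ p 1 ≤ my) := by
          apply Finset.filter_congr
          intro p _
          simp [not_lt]
        rw [e1, e2] at hy2
        rw [e3] at hy1
        exact net_arith3 hx hy1 hy2
      have hkeyP := key P
      have hkeyF := key F
      -- rewrite the four pieces of F as anchored filters of the quadrants
      have eq1 : F.filter (fun p => mx < p 0 ∧ my < p 1)
          = (P.filter fun p => mx < p 0 ∧ my < p 1).filter
              (fun p => p 0 ≤ b ∧ p 1 ≤ d) := by
        rw [hF, Finset.filter_filter, Finset.filter_filter]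
        apply Finset.filter_congr
        intro p _
        constructor
        · rintro ⟨⟨h1, h2, h3, h4⟩, hq1, hq2⟩
          exact ⟨⟨hq1, hq2⟩, h2, h4⟩
        · rintro ⟨⟨hq1, hq2⟩, hb', hd'⟩
          exact ⟨⟨by linarith, hb', by linarith, hd'⟩, hq1, hq2⟩
      have eq2 : F.filter (fun p => p 0 ≤ mx ∧ my < p 1)
          = (P.filter fun p => p 0 ≤ mx ∧ my < p 1).filter
              (fun p => -(p 0) ≤ -a ∧ p 1 ≤ d) := by
        rw [hF, Finset.filter_filter, Finset.filter_filter]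
        apply Finset.filter_congr
        intro p _
        constructor
        · rintro ⟨⟨h1, h2, h3, h4⟩, hq1, hq2⟩
          exact ⟨⟨hq1, hq2⟩, by linarith, h4⟩
        · rintro ⟨⟨hq1, hq2⟩, hb', hd'⟩
          exact ⟨⟨by linarith, by linarith, by linarith, hd'⟩, hq1, hq2⟩
      have eq3 : F.filter (fun p => p 0 ≤ mx ∧ p 1 ≤ my)
          = (P.filter fun p => p 0 ≤ mx ∧ p 1 ≤ my).filter
              (fun p => -(p 0) ≤ -a ∧ -(p 1) ≤ -c) := by
        rw [hF, Finset.filter_filter, Finset.filter_filter]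
        apply Finset.filter_congr
        intro p _
        constructor
        · rintro ⟨⟨h1, h2, h3, h4⟩, hq1, hq2⟩
          exact ⟨⟨hq1, hq2⟩, by linarith, by linarith⟩
        · rintro ⟨⟨hq1, hq2⟩, hb', hd'⟩
          exact ⟨⟨by linarith, by linarith, by linarith, by linarith⟩, hq1, hq2⟩
      have eq4 : F.filter (fun p => mx < p 0 ∧ p 1 ≤ my)
          = (P.filter fun p => mx < p 0 ∧ p 1 ≤ my).filter
              (fun p => p 0 ≤ b ∧ -(p 1) ≤ -c) := by
        rw [hF, Finset.filter_filter, Finset.filter_filter]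
        apply Finset.filter_congr
        intro p _
        constructor
        · rintro ⟨⟨h1, h2, h3, h4⟩, hq1, hq2⟩
          exact ⟨⟨hq1, hq2⟩, h2, by linarith⟩
        · rintro ⟨⟨hq1, hq2⟩, hb', hd'⟩
          exact ⟨⟨by linarith, hb', by linarith, by linarith⟩, hq1, hq2⟩
      rw [eq1, eq2, eq3, eq4] at hkeyF
      have hdisj :
          (P.filter fun p => mx < p 0 ∧ my < p 1).card
              < 2 * ((P.filter fun p => mx < p 0 ∧ my < p 1).filter
                  (fun p => p 0 ≤ b ∧ p 1 ≤ d)).card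
          ∨ (P.filter fun p => p 0 ≤ mx ∧ my < p 1).card
              < 2 * ((P.filter fun p => p 0 ≤ mx ∧ my < p 1).filter
                  (fun p => -(p 0) ≤ -a ∧ p 1 ≤ d)).card
          ∨ (P.filter fun p => p 0 ≤ mx ∧ p 1 ≤ my).card
              < 2 * ((P.filter fun p => p 0 ≤ mx ∧ p 1 ≤ my).filter
                  (fun p => -(p 0) ≤ -a ∧ -(p 1) ≤ -c)).card
          ∨ (P.filter fun p => mx < p 0 ∧ p 1 ≤ my).card
              < 2 * ((P.filter fun p => mx < p 0 ∧ p 1 ≤ my).filter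
                  (fun p => p 0 ≤ b ∧ -(p 1) ≤ -c)).card :=
        net_arith4 hkeyP hkeyF hcard'
      rcases hdisj with h | h | h | h
      · obtain ⟨hzQ, hzb, hzd⟩ := hz1' b d h
        have hq : mx < z1 0 ∧ my < z1 1 := (Finset.mem_filter.mp hzQ).2
        refine ⟨z1, by simp, ?_⟩
        simp only [Set.mem_setOf_eq]
        exact ⟨by linarith [hq.1], hzb, by linarith [hq.2], hzd⟩
      · obtain ⟨hzQ, hzb, hzd⟩ := hz2' (-a) d h
        have hq : z2 0 ≤ mx ∧ my < z2 1 := (Finset.mem_filter.mp hzQ).2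
        refine ⟨z2, by simp, ?_⟩
        simp only [Set.mem_setOf_eq]
        exact ⟨by linarith, by linarith [hq.1], by linarith [hq.2], hzd⟩
      · obtain ⟨hzQ, hzb, hzd⟩ := hz3' (-a) (-c) h
        have hq : z3 0 ≤ mx ∧ z3 1 ≤ my := (Finset.mem_filter.mp hzQ).2
        refine ⟨z3, by simp, ?_⟩
        simp only [Set.mem_setOf_eq]
        exact ⟨by linarith, by linarith [hq.1], by linarith, by linarith [hq.2]⟩
      · obtain ⟨hzQ, hzb, hzd⟩ := hz4' b (-c) h
        have hq : mx < z4 0 ∧ z4 1 ≤ my := (Finset.mem_filter.mp hzQ).2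
        refine ⟨z4, by simp, ?_⟩
        simp only [Set.mem_setOf_eq]
        exact ⟨by linarith [hq.1], hzb, by linarith, by linarith [hq.2]⟩
end

section
/- For every real number ε with 0 ≤ ε < 3/10, there exists a finite set P ⊂ ℝ² such that for every subset Q ⊆ P with |Q| ≤ 4 there exists an axis-parallel rectangle R with R ∩ Q = ∅ and |R ∩ P| > ε·|P|. Hence no strong ε-net of size 4 with ε < 3/10 exists for axis-parallel rectangles, i.e., ε_4^R ≥ 3/10. -/
/-!
Take the ten points `(m, y m)`, `m = 0, …, 9`, with `y = (7, 9, 3, 4, 6, 1, 5, 0, 8, 2)`.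
There are thirteen triples of these points whose bounding boxes contain no further point of
the configuration, and these are arranged so that every four points miss one of the thirteen
boxes (a finite check). Such a box is a rectangle avoiding the four points and containing
`3 > 10 ε` points.
-/

open Finset

theorem Set.ncard_inter_coe_image {α β : Type*} [DecidableEq β] {f : α → β}
    (hf : Function.Injective f) (s : Finset α) (R : Set β) [DecidablePred (f · ∈ R)] :
    (R ∩ ↑(s.image f)).ncard = #{a ∈ s | f a ∈ R} := by
  have h : R ∩ ↑(s.image f) = ↑({a ∈ s | f a ∈ R}.image f) := by
    ext x
    simp only [Set.mem_inter_iff, coe_image, coe_filter, Set.mem_image, Set.mem_ofPred_eq]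
    grind
  rw [h, Set.ncard_coe_finset, Finset.card_image_of_injective _ hf]

def rect (a b c d : ℝ) : Set (EuclideanSpace ℝ (Fin 2)) :=
  {x | a ≤ x 0 ∧ x 0 ≤ b ∧ c ≤ x 1 ∧ x 1 ≤ d}

theorem isRect_rect (a b c d : ℝ) : IsRect (rect a b c d) := ⟨a, b, c, d, rfl⟩

theorem mem_rect_natCast_iff {a b c d m n : ℕ} :
    !₂[(m : ℝ), (n : ℝ)] ∈ rect a b c d ↔ a ≤ m ∧ m ≤ b ∧ c ≤ n ∧ n ≤ d := by
  simp [rect]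

namespace TenPoints

def yCoord : Fin 10 → ℕ := ![7, 9, 3, 4, 6, 1, 5, 0, 8, 2]

noncomputable def point (m : Fin 10) : EuclideanSpace ℝ (Fin 2) := !₂[(m : ℕ), yCoord m]

theorem point_injective : Function.Injective point := fun m m' h ↦
  Fin.val_injective <| by simpa [point] using congrArg (· 0) h

abbrev Triple := Fin 10 × Fin 10 × Fin 10

def xMin (t : Triple) : ℕ := min t.1 (min t.2.1 t.2.2)
def xMax (t : Triple) : ℕ := max t.1 (max t.2.1 t.2.2)
def yMin (t : Triple) : ℕ := min (yCoord t.1) (min (yCoord t.2.1) (yCoord t.2.2))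
def yMax (t : Triple) : ℕ := max (yCoord t.1) (max (yCoord t.2.1) (yCoord t.2.2))

def InBox (t : Triple) (m : Fin 10) : Prop :=
  xMin t ≤ m ∧ m ≤ xMax t ∧ yMin t ≤ yCoord m ∧ yCoord m ≤ yMax t

instance (t : Triple) : DecidablePred (InBox t) := fun _ ↦ by unfold InBox; infer_instance

noncomputable def box (t : Triple) : Set (EuclideanSpace ℝ (Fin 2)) :=
  rect (xMin t) (xMax t) (yMin t) (yMax t)

theorem point_mem_box_iff (t : Triple) (m : Fin 10) : point m ∈ box t ↔ InBox t m :=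
  mem_rect_natCast_iff

def triples : List Triple :=
  [(0, 1, 2), (3, 4, 5), (6, 7, 8), (2, 3, 9), (4, 6, 9), (5, 7, 9), (0, 4, 8), (0, 1, 3),
   (5, 6, 8), (2, 5, 7), (1, 4, 8), (0, 4, 6), (1, 2, 3)]

set_option maxRecDepth 10000 in
theorem card_filter_inBox : ∀ t ∈ triples, #{m | InBox t m} = 3 := by decide

set_option maxRecDepth 10000 in
theorem exists_triple_box_avoiding (Q : Finset (Fin 10)) (hQ : #Q ≤ 4) :
    ∃ t ∈ triples, ∀ q ∈ Q, ¬InBox t q := by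
  revert Q; decide

end TenPoints

open TenPoints in
theorem epsR_four_lower_general (ε : ℝ) (hε : ε < 3 / 10) :
    ∃ P : Finset (EuclideanSpace ℝ (Fin 2)),
      ∀ Q : Finset (EuclideanSpace ℝ (Fin 2)), Q ⊆ P → Q.card ≤ 4 →
        ∃ R : Set (EuclideanSpace ℝ (Fin 2)), IsRect R ∧ (∀ q ∈ Q, q ∉ R) ∧
          ε * P.card < ((R ∩ ↑P).ncard : ℝ) := by
  classical
  refine ⟨univ.image point, fun Q hQP hQ ↦ ?_⟩
  have hpre : #(Q.preimage point point_injective.injOn) ≤ 4 :=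
    (card_le_card_of_injOn point (fun _ hm ↦ mem_preimage.1 hm) point_injective.injOn).trans hQ
  obtain ⟨t, ht, hQt⟩ := exists_triple_box_avoiding _ hpre
  refine ⟨box t, isRect_rect .., fun q hq hqR ↦ ?_, ?_⟩
  · obtain ⟨m, -, rfl⟩ := mem_image.1 (hQP hq)
    exact hQt m (mem_preimage.2 hq) ((point_mem_box_iff t m).1 hqR)
  · simp only [Set.ncard_inter_coe_image point_injective, point_mem_box_iff,
      card_filter_inBox t ht, card_image_of_injective _ point_injective, card_univ,
      Fintype.card_fin]
    push_cast
    linarith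

/-- Lower bound: no strong ε-net of size 4 with ε < 3 / 10 exists for axis-parallel
rectangles, i.e. ε_4^R ≥ 3 / 10. -/
theorem epsR_four_lower (ε : ℝ) (hε0 : 0 ≤ ε) (hε : ε < 3 / 10) :
    ∃ P : Finset (EuclideanSpace ℝ (Fin 2)),
      ∀ Q : Finset (EuclideanSpace ℝ (Fin 2)), Q ⊆ P → Q.card ≤ 4 →
        ∃ R : Set (EuclideanSpace ℝ (Fin 2)), IsRect R ∧ (∀ q ∈ Q, q ∉ R) ∧
          ε * P.card < ((R ∩ ↑P).ncard : ℝ) :=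
  epsR_four_lower_general ε hε
end

section
/- For every real number ε with 0 ≤ ε < 1/4, there exists a finite set P ⊂ ℝ² such that for every subset Q ⊆ P with |Q| ≤ 5 there exists an axis-parallel rectangle R with R ∩ Q = ∅ and |R ∩ P| > ε·|P|. Hence no strong ε-net of size 5 with ε < 1/4 exists for axis-parallel rectangles, i.e., ε_5^R ≥ 1/4. -/
namespace EpsRAux

def X : Fin 8 → ℤ := ![0,1,2,3,4,5,6,7]
def Y : Fin 8 → ℤ := ![0,3,2,5,4,1,7,6]

noncomputable def pt (i : Fin 8) : EuclideanSpace ℝ (Fin 2) :=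
  (EuclideanSpace.equiv (Fin 2) ℝ).symm ![(X i : ℝ), (Y i : ℝ)]

lemma pt_apply0 (i : Fin 8) : pt i 0 = (X i : ℝ) := rfl
lemma pt_apply1 (i : Fin 8) : pt i 1 = (Y i : ℝ) := rfl

def edges : List (Fin 8 × Fin 8) :=
  [(0,1), (0,2), (0,5), (1,2), (1,3), (1,4), (2,3), (2,4), (2,5), (3,4), (3,6), (3,7),
   (4,5), (4,6), (4,7), (5,6), (5,7), (6,7)]

set_option maxRecDepth 10000 in
lemma comb : ∀ S : Finset (Fin 8), S.card ≤ 5 →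
    ∃ e ∈ edges, e.1 ∉ S ∧ e.2 ∉ S := by decide

lemma empt : ∀ e ∈ edges, ∀ k : Fin 8, k ≠ e.1 → k ≠ e.2 →
    ¬(min (X e.1) (X e.2) ≤ X k ∧ X k ≤ max (X e.1) (X e.2) ∧
      min (Y e.1) (Y e.2) ≤ Y k ∧ Y k ≤ max (Y e.1) (Y e.2)) := by decide

lemma edistinct : ∀ e ∈ edges, e.1 ≠ e.2 := by decide

lemma X_inj : Function.Injective X := by decide

lemma pt_inj : Function.Injective pt := by
  intro i j h
  apply X_inj
  have := congrArg (fun x => x 0) h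
  simpa [pt_apply0, Int.cast_injective.eq_iff] using this

end EpsRAux

open EpsRAux in
/-- Lower bound: no strong ε-net of size 5 with ε < 1 / 4 exists for axis-parallel
rectangles, i.e. ε_5^R ≥ 1 / 4. -/
theorem epsR_five_lower (ε : ℝ) (hε0 : 0 ≤ ε) (hε : ε < 1 / 4) :
    ∃ P : Finset (EuclideanSpace ℝ (Fin 2)),
      ∀ Q : Finset (EuclideanSpace ℝ (Fin 2)), Q ⊆ P → Q.card ≤ 5 →
        ∃ R : Set (EuclideanSpace ℝ (Fin 2)), IsRect R ∧ (∀ q ∈ Q, q ∉ R) ∧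
          ε * P.card < ((R ∩ ↑P).ncard : ℝ) := by
  classical
  refine ⟨Finset.univ.image pt, ?_⟩
  intro Q hQP hQ5
  -- the index set of Q
  set S : Finset (Fin 8) := Finset.univ.filter (fun i => pt i ∈ Q) with hS
  have hScard : S.card ≤ 5 := by
    have h1 : S.image pt ⊆ Q := by
      intro q hq
      simp only [Finset.mem_image] at hq
      obtain ⟨i, hi, rfl⟩ := hq
      simpa [hS] using hi
    calc S.card = (S.image pt).card := (Finset.card_image_of_injective _ pt_inj).symm
      _ ≤ Q.card := Finset.card_le_card h1
      _ ≤ 5 := hQ5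
  obtain ⟨e, he, hi, hj⟩ := comb S hScard
  -- the rectangle: bounding box of pt e.1, pt e.2
  set a : ℝ := min ((X e.1 : ℝ)) ((X e.2 : ℝ)) with ha
  set b : ℝ := max ((X e.1 : ℝ)) ((X e.2 : ℝ)) with hb
  set c : ℝ := min ((Y e.1 : ℝ)) ((Y e.2 : ℝ)) with hc
  set d : ℝ := max ((Y e.1 : ℝ)) ((Y e.2 : ℝ)) with hd
  refine ⟨{x | a ≤ x 0 ∧ x 0 ≤ b ∧ c ≤ x 1 ∧ x 1 ≤ d}, ⟨a, b, c, d, rfl⟩, ?_, ?_⟩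
  · -- Q avoids R
    intro q hq hqR
    have hqP : q ∈ Finset.univ.image pt := hQP hq
    simp only [Finset.mem_image, Finset.mem_univ, true_and] at hqP
    obtain ⟨k, rfl⟩ := hqP
    have hkS : k ∈ S := by simp [hS, hq]
    have hk1 : k ≠ e.1 := by rintro rfl; exact hi hkS
    have hk2 : k ≠ e.2 := by rintro rfl; exact hj hkS
    apply empt e he k hk1 hk2
    simp only [Set.mem_setOf_eq, pt_apply0, pt_apply1, ha, hb, hc, hd] at hqR
    exact_mod_cast hqR
  · -- count
    have hsub : ({pt e.1, pt e.2} : Set (EuclideanSpace ℝ (Fin 2))) ⊆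
        {x | a ≤ x 0 ∧ x 0 ≤ b ∧ c ≤ x 1 ∧ x 1 ≤ d} ∩ ↑(Finset.univ.image pt) := by
      rintro x (rfl | rfl)
      · refine ⟨⟨min_le_left _ _, le_max_left _ _, min_le_left _ _, le_max_left _ _⟩, ?_⟩
        simp [Finset.mem_image]
      · refine ⟨⟨min_le_right _ _, le_max_right _ _, min_le_right _ _, le_max_right _ _⟩, ?_⟩
        simp [Finset.mem_image]
    have hfin : ({x | a ≤ x 0 ∧ x 0 ≤ b ∧ c ≤ x 1 ∧ x 1 ≤ d} ∩
        ↑(Finset.univ.image pt) : Set (EuclideanSpace ℝ (Fin 2))).Finite :=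
      (Finset.univ.image pt).finite_toSet.subset Set.inter_subset_right
    have hpair : ({pt e.1, pt e.2} : Set (EuclideanSpace ℝ (Fin 2))).ncard = 2 :=
      Set.ncard_pair (fun h => edistinct e he (pt_inj h))
    have h2 : 2 ≤ (({x | a ≤ x 0 ∧ x 0 ≤ b ∧ c ≤ x 1 ∧ x 1 ≤ d} ∩
        ↑(Finset.univ.image pt) : Set (EuclideanSpace ℝ (Fin 2))).ncard) := by
      exact le_trans (le_of_eq hpair.symm) (Set.ncard_le_ncard hsub hfin)
    have hcard : (Finset.univ.image pt).card = 8 := by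
      rw [Finset.card_image_of_injective _ pt_inj, Finset.card_univ, Fintype.card_fin]
    rw [hcard]
    have : ε * 8 < 2 := by nlinarith
    calc ε * (8 : ℕ) = ε * 8 := by norm_num
      _ < 2 := this
      _ ≤ _ := by exact_mod_cast h2
end

section
/- For every integer i ≥ 2 and every real number ε with 0 ≤ ε < 10/(9i), there exists a finite set P ⊂ ℝ² such that for every subset Q ⊆ P with |Q| ≤ i there exists an axis-parallel rectangle R with R ∩ Q = ∅ and |R ∩ P| > ε·|P|. Hence ε_i^R ≥ 10/(9i) for all i ≥ 2. -/
/-!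
The 9-point permutation set `ninePointGadget` has the property that any 2 of its points are
missed by an axis-parallel box containing 5 of its points; in `tenPointGadget` any 3 points are
missed by a box containing 4 points. Both are finite checks against an explicit list of boxes.
Put `k` copies of such a set side by side in disjoint vertical strips. A set `Q` with fewer
than `k (c + 1)` points meets some copy in at most `c` points, and the box found for that copy,
clipped to its strip, misses all of `Q`. For `i ≠ 3`, `⌊i/2⌋` copies of the 9-point set give
`i < 3 ⌊i/2⌋` and `5 > 9 ⌊i/2⌋ ε` when `ε < 10 / (9 i)`; for `i = 3` one copy of the 10-point set
gives `4 > 10 ε`.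
-/

open Finset

local notation "ℝ²" => EuclideanSpace ℝ (Fin 2)

/-- No `Q ⊆ P` with at most `c` points is a strong net for the rectangles containing more than
`t` points of `P`. -/
def NoRectNet (P : Finset ℝ²) (c : ℕ) (t : ℝ) : Prop :=
  ∀ Q ⊆ P, #Q ≤ c → ∃ R : Set ℝ², IsRect R ∧ (∀ q ∈ Q, q ∉ R) ∧ t < (R ∩ ↑P).ncard

section IccNet

variable {α : Type*}

/-- `NoRectNet` for the boxes `Set.Icc lo hi` of a preorder (in `ℕ × ℕ` with the product order,
the axis-parallel boxes), with a threshold `m` that must be attained. -/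
def NoIccNet [Preorder α] [DecidableLE α] (G : Finset α) (c m : ℕ) : Prop :=
  ∀ S ⊆ G, #S ≤ c →
    ∃ lo hi : α, (∀ p ∈ S, p ∉ Set.Icc lo hi) ∧ m ≤ #{p ∈ G | p ∈ Set.Icc lo hi}

theorem NoIccNet.of_forall_mem_powerset [Preorder α] [DecidableLE α] {G : Finset α} {c m : ℕ}
    (L : List (α × α))
    (h : ∀ S ∈ G.powerset, #S ≤ c → ∃ B ∈ L,
      (∀ p ∈ S, p ∉ Set.Icc B.1 B.2) ∧ m ≤ #{p ∈ G | p ∈ Set.Icc B.1 B.2}) :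
    NoIccNet G c m := fun S hS hc ↦ by
  obtain ⟨B, -, hB⟩ := h S (mem_powerset.2 hS) hc
  exact ⟨B.1, B.2, hB⟩

theorem NoIccNet.image_add_right [AddCommMonoid α] [PartialOrder α] [IsOrderedCancelAddMonoid α]
    [DecidableLE α] [DecidableEq α] {G : Finset α} {c m : ℕ} (h : NoIccNet G c m) (v : α) :
    NoIccNet (G.image (· + v)) c m := by
  intro S hS hc
  have hinj : Function.Injective (· + v : α → α) := add_left_injective v
  obtain ⟨lo, hi, hmiss, hm⟩ := h {p ∈ G | p + v ∈ S} (filter_subset _ _)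
    ((card_le_card_of_injOn _ (fun p hp ↦ (mem_filter.1 hp).2) hinj.injOn).trans hc)
  refine ⟨lo + v, hi + v, fun q hq hqI ↦ ?_, ?_⟩
  · obtain ⟨p, hp, rfl⟩ := mem_image.1 (hS hq)
    exact hmiss p (mem_filter.2 ⟨hp, hq⟩) (by simpa using hqI)
  · rw [filter_image, card_image_of_injective _ hinj]
    simpa using hm

theorem NoIccNet.biUnion [Lattice α] [DecidableLE α] [DecidableEq α] {ι : Type*} {s : Finset ι}
    {G : ι → Finset α} {c m c' : ℕ} (lo hi : ι → α)
    (hbox : ∀ j ∈ s, ∀ j' ∈ s, ∀ p ∈ G j', p ∈ Set.Icc (lo j) (hi j) ↔ j' = j)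
    (h : ∀ j ∈ s, NoIccNet (G j) c m) (hc' : c' < #s * (c + 1)) :
    NoIccNet (s.biUnion G) c' m := by
  intro S hS hcard
  have hdisj : (s : Set ι).PairwiseDisjoint fun j ↦ S ∩ G j := by
    intro j hj j' hj' hne
    refine disjoint_left.2 fun p hp hp' ↦ hne ?_
    exact ((hbox j hj j' hj' p (mem_inter.1 hp').2).1
      ((hbox j hj j hj p (mem_inter.1 hp).2).2 rfl)).symm
  have hsum : ∑ j ∈ s, #(S ∩ G j) < ∑ _j ∈ s, (c + 1) := calc
    ∑ j ∈ s, #(S ∩ G j) = #(s.biUnion fun j ↦ S ∩ G j) := (card_biUnion hdisj).symm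
    _ ≤ #S := card_le_card (biUnion_subset.2 fun j _ ↦ inter_subset_left)
    _ < ∑ _j ∈ s, (c + 1) := by simpa using hcard.trans_lt hc'
  obtain ⟨j, hj, hsmall⟩ := exists_lt_of_sum_lt hsum
  obtain ⟨lo', hi', hmiss, hm⟩ := h j hj (S ∩ G j) inter_subset_right (Nat.lt_succ_iff.1 hsmall)
  refine ⟨lo' ⊔ lo j, hi' ⊓ hi j, fun p hp hpI ↦ ?_, hm.trans (card_le_card fun p ↦ ?_)⟩
  · rw [← Set.Icc_inter_Icc] at hpI
    obtain ⟨j', hj', hpj'⟩ := mem_biUnion.1 (hS hp)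
    obtain rfl := (hbox j hj j' hj' p hpj').1 hpI.2
    exact hmiss p (mem_inter.2 ⟨hp, hpj'⟩) hpI.1
  · simp only [mem_filter, ← Set.Icc_inter_Icc, Set.mem_inter_iff, mem_biUnion]
    exact fun ⟨hp, hpI⟩ ↦ ⟨⟨j, hj, hp⟩, hpI, (hbox j hj j hj p hp).2 rfl⟩

end IccNet

def rowCopies (G : Finset (ℕ × ℕ)) (b k : ℕ) : Finset (ℕ × ℕ) :=
  (range k).biUnion fun j ↦ G.image (· + ((b + 1) * j, 0))

theorem card_rowCopies_le (G : Finset (ℕ × ℕ)) (b k : ℕ) : #(rowCopies G b k) ≤ k * #G := by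
  unfold rowCopies
  simpa using card_biUnion_le_card_mul (range k) _ #G fun j _ ↦ card_image_le

theorem NoIccNet.rowCopies {G : Finset (ℕ × ℕ)} {b c m k c' : ℕ} (h : NoIccNet G c m)
    (hG : ∀ p ∈ G, p ≤ (b, b)) (hc' : c' < k * (c + 1)) : NoIccNet (rowCopies G b k) c' m := by
  refine NoIccNet.biUnion (fun j ↦ ((b + 1) * j, 0)) (fun j ↦ ((b + 1) * j + b, b)) ?_
    (fun j _ ↦ h.image_add_right _) (by simpa using hc')
  intro j _ j' _ p hp
  obtain ⟨g, hg, rfl⟩ := mem_image.1 hp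
  obtain ⟨hg1, hg2⟩ : g.1 ≤ b ∧ g.2 ≤ b := hG g hg
  simp only [Set.mem_Icc, Prod.le_def, Prod.fst_add, Prod.snd_add, add_zero, zero_le, and_true,
    hg2]
  constructor
  · rintro ⟨h1, h2⟩
    have : j < j' + 1 := Nat.lt_of_mul_lt_mul_left (a := b + 1) (by linarith)
    have : j' < j + 1 := Nat.lt_of_mul_lt_mul_left (a := b + 1) (by linarith)
    omega
  · rintro rfl
    exact ⟨le_add_self, by linarith⟩

def toPlane (p : ℕ × ℕ) : ℝ² := !₂[p.1, p.2]

theorem toPlane_injective : Function.Injective toPlane := by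
  intro p q h
  have h0 : (p.1 : ℝ) = q.1 := by simpa [toPlane] using congrArg (· 0) h
  have h1 : (p.2 : ℝ) = q.2 := by simpa [toPlane] using congrArg (· 1) h
  exact Prod.ext (by exact_mod_cast h0) (by exact_mod_cast h1)

theorem NoIccNet.image_toPlane {G : Finset (ℕ × ℕ)} {c m : ℕ} {t : ℝ} (h : NoIccNet G c m)
    (ht : t < m) : NoRectNet (G.image toPlane) c t := by
  intro Q hQ hc
  obtain ⟨lo, hi, hmiss, hm⟩ := h {p ∈ G | toPlane p ∈ Q} (filter_subset _ _)
    ((card_le_card_of_injOn _ (fun p hp ↦ (mem_filter.1 hp).2) toPlane_injective.injOn).trans hc)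
  set R : Set ℝ² := {x | (lo.1 : ℝ) ≤ x 0 ∧ x 0 ≤ hi.1 ∧ (lo.2 : ℝ) ≤ x 1 ∧ x 1 ≤ hi.2}
  have hR (p : ℕ × ℕ) : toPlane p ∈ R ↔ p ∈ Set.Icc lo hi := by
    simp only [R, toPlane, Set.mem_ofPred_eq, Matrix.cons_val_zero, Matrix.cons_val_one,
      Matrix.cons_val_fin_one, Nat.cast_le, Set.mem_Icc, Prod.le_def]
    tauto
  refine ⟨R, ⟨_, _, _, _, rfl⟩, fun q hq hqR ↦ ?_, ?_⟩
  · obtain ⟨p, hp, rfl⟩ := mem_image.1 (hQ hq)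
    exact hmiss p (mem_filter.2 ⟨hp, hq⟩) ((hR p).1 hqR)
  · have hcount : m ≤ (R ∩ ↑(G.image toPlane)).ncard := calc
      m ≤ #{p ∈ G | p ∈ Set.Icc lo hi} := hm
      _ = #({p ∈ G | p ∈ Set.Icc lo hi}.image toPlane) :=
        (card_image_of_injective _ toPlane_injective).symm
      _ ≤ (R ∩ ↑(G.image toPlane)).ncard := by
        rw [← Set.ncard_coe_finset]
        refine Set.ncard_le_ncard ?_ (Set.toFinite _)
        simp only [coe_image, coe_filter]
        rintro _ ⟨p, ⟨hp, hpI⟩, rfl⟩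
        exact ⟨(hR p).2 hpI, p, hp, rfl⟩
    exact ht.trans_le (by exact_mod_cast hcount)

theorem NoIccNet.exists_noRectNet {G : Finset (ℕ × ℕ)} {b c m k c' : ℕ} {ε : ℝ}
    (h : NoIccNet G c m) (hG : ∀ p ∈ G, p ≤ (b, b)) (hc' : c' < k * (c + 1)) (hε0 : 0 ≤ ε)
    (hε : ε * (k * #G) < m) : ∃ P : Finset ℝ², NoRectNet P c' (ε * #P) := by
  refine ⟨_, (h.rowCopies hG hc').image_toPlane (lt_of_le_of_lt ?_ hε)⟩
  gcongr
  exact_mod_cast card_image_le.trans (card_rowCopies_le G b k)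

def ninePointGadget : Finset (ℕ × ℕ) :=
  {(0, 2), (1, 3), (2, 5), (3, 1), (4, 0), (5, 8), (6, 7), (7, 6), (8, 4)}

def tenPointGadget : Finset (ℕ × ℕ) :=
  {(0, 2), (1, 1), (2, 5), (3, 7), (4, 9), (5, 6), (6, 0), (7, 8), (8, 4), (9, 3)}

set_option maxRecDepth 8000 in
theorem noIccNet_ninePointGadget : NoIccNet ninePointGadget 2 5 :=
  .of_forall_mem_powerset [((0, 2), (6, 8)), ((0, 0), (8, 4)), ((0, 2), (8, 6)), ((0, 3), (8, 7)),
    ((0, 4), (8, 8)), ((1, 0), (5, 8)), ((2, 0), (6, 8)), ((2, 0), (7, 7)), ((2, 0), (8, 6)),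
    ((3, 0), (7, 8)), ((3, 1), (8, 8)), ((4, 0), (8, 8))] (by decide)

set_option maxRecDepth 8000 in
theorem noIccNet_tenPointGadget : NoIccNet tenPointGadget 3 4 :=
  .of_forall_mem_powerset [((0, 2), (4, 9)), ((0, 0), (5, 6)), ((0, 2), (5, 7)), ((0, 6), (7, 9)),
    ((0, 0), (8, 4)), ((0, 0), (9, 3)), ((0, 1), (9, 4)), ((0, 3), (9, 6)), ((1, 0), (4, 9)),
    ((1, 0), (6, 6)), ((1, 0), (9, 4)), ((2, 0), (9, 5)), ((3, 0), (9, 6)), ((4, 0), (7, 9)),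
    ((6, 0), (9, 8))] (by decide)

/-- Lower bound: for every `i ≥ 2`, no strong ε-net of size `i` with `ε < 10/(9i)` exists
for axis-parallel rectangles, i.e. `ε_i^R ≥ 10/(9i)`. -/
theorem epsR_general_lower (i : ℕ) (hi : 2 ≤ i) (ε : ℝ) (hε0 : 0 ≤ ε)
    (hε : ε < 10 / (9 * i)) :
    ∃ P : Finset (EuclideanSpace ℝ (Fin 2)),
      ∀ Q : Finset (EuclideanSpace ℝ (Fin 2)), Q ⊆ P → Q.card ≤ i →
        ∃ R : Set (EuclideanSpace ℝ (Fin 2)), IsRect R ∧ (∀ q ∈ Q, q ∉ R) ∧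
          ε * P.card < ((R ∩ ↑P).ncard : ℝ) := by
  rcases eq_or_ne i 3 with rfl | hi3
  · refine noIccNet_tenPointGadget.exists_noRectNet (b := 9) (k := 1) (by decide)
      (by norm_num) hε0 ?_
    rw [show #tenPointGadget = 10 by rfl]
    norm_num at hε ⊢
    linarith
  · refine noIccNet_ninePointGadget.exists_noRectNet (b := 8) (k := i / 2) (by decide)
      (by omega) hε0 ?_
    rw [show #ninePointGadget = 9 by rfl]
    have h9i : ε * (9 * i) < 10 := (lt_div_iff₀ (by positivity)).1 hε
    have hk : (2 * (i / 2 : ℕ) : ℝ) ≤ i := by exact_mod_cast Nat.mul_div_le i 2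
    push_cast
    nlinarith
end

section
/- For every real number ε with 0 ≤ ε < 1/3, there exists a finite set P ⊂ ℝ² such that for every set N ⊆ ℝ² with |N| ≤ 3 there exists a closed disk D with D ∩ N = ∅ and |D ∩ P| > ε·|P|. Hence no weak ε-net of size 3 with ε < 1/3 exists for disks, i.e., ε_3^D ≥ 1/3 for weak ε-nets. -/
/-!
Take three clusters of `m` points: two short segments near `∓ w / 2`, both in the direction
`J w` perpendicular to `w`, and a third cluster at distance `40 m`. If some cluster has no point
of `N` within `1 / 5`, a small disk around it catches its `m` points. Otherwise `N` consists of one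
point next to each cluster, say `a`, `b` and `q`. The line `ab` crosses both segments
transversally, so each segment has at most one point in a thin slab around the line, and one side
of the line holds at least `m - 1` of their points. A disk whose boundary passes through `a` and
`b`, with its centre far out on that side, contains these points, and it is still small compared
with the distance to `q`. Choosing `(1 - 3 ε) m > 1` makes `m - 1 > ε · 3 m`.
-/

/-- A disk in ℝ²: a closed ball with nonnegative radius. -/
def IsDisk (D : Set (EuclideanSpace ℝ (Fin 2))) : Prop :=
  ∃ (c : EuclideanSpace ℝ (Fin 2)) (r : ℝ), 0 ≤ r ∧ D = Metric.closedBall c r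

open Finset Metric Module
open scoped RealInnerProductSpace

section Metric

variable {α : Type*} [PseudoMetricSpace α]

lemma exists_closedBall_of_forall_dist_lt {S : Finset α} {N : Set α} {z : α} (hS : S.Nonempty)
    (h : ∀ p ∈ S, ∀ q ∈ N, dist p z < dist q z) :
    ∃ r, 0 ≤ r ∧ (S : Set α) ⊆ closedBall z r ∧ ∀ q ∈ N, q ∉ closedBall z r := by
  obtain ⟨p, hp, hpr⟩ := exists_mem_eq_sup' hS (dist · z)
  refine ⟨S.sup' hS (dist · z), hpr ▸ dist_nonneg,
    fun x hx => mem_closedBall.2 (le_sup' (dist · z) hx), fun q hq hqz => ?_⟩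
  exact (h p hp q hq).not_ge (hpr ▸ mem_closedBall.1 hqz)

lemma dist_lt_dist_of_add_two_mul_dist_lt {a q z M : α}
    (h : dist a M + 2 * dist z M < dist q M) : dist a z < dist q z := by
  linarith [dist_triangle a M z, dist_triangle q z M, dist_comm M z]

end Metric

lemma Finset.card_le_ncard_inter {α : Type*} {S P : Finset α} {D : Set α} (hSP : S ⊆ P)
    (hSD : (S : Set α) ⊆ D) : #S ≤ (D ∩ P).ncard := by
  rw [← Set.ncard_coe_finset S]
  exact Set.ncard_le_ncard (Set.subset_inter hSD (coe_subset.2 hSP))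
    (P.finite_toSet.inter_of_right _)

lemma card_filter_abs_le_le_one {a d w : ℝ} (hd : 2 * w < |d|) (m : ℕ) :
    #{j ∈ range m | |a + (j : ℕ) * d| ≤ w} ≤ 1 := by
  refine card_le_one.2 fun j hj j' hj' => ?_
  simp only [mem_filter] at hj hj'
  by_contra hne
  have hjj' : 1 ≤ |(j : ℝ) - j'| := by
    have h := Int.one_le_abs (sub_ne_zero.2 (Nat.cast_injective.ne hne : (j : ℤ) ≠ j'))
    exact_mod_cast h
  have : |((j : ℝ) - j') * d| ≤ 2 * w := by
    calc |((j : ℝ) - j') * d| = |(a + j * d) - (a + j' * d)| := by ring_nf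
      _ ≤ |a + j * d| + |a + j' * d| := abs_sub _ _
      _ ≤ 2 * w := by linarith [hj.2, hj'.2]
  rw [abs_mul] at this
  nlinarith [abs_nonneg d]

lemma le_card_filter_lt_add_card_filter_neg_lt {a d w : ℝ} (hd : 2 * w < |d|) (m : ℕ) :
    m ≤ #{j ∈ range m | w < a + (j : ℕ) * d} +
      #{j ∈ range m | w < -(a + (j : ℕ) * d)} + 1 := by
  calc m = #(range m) := (card_range m).symm
    _ ≤ #({j ∈ range m | w < a + (j : ℕ) * d} ∪
          {j ∈ range m | w < -(a + (j : ℕ) * d)} ∪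
          {j ∈ range m | |a + (j : ℕ) * d| ≤ w}) := by
        refine card_le_card fun j hj => ?_
        simp only [mem_union, mem_filter, and_iff_right hj]
        by_contra! h
        exact h.2.not_ge (abs_le.2 ⟨by linarith [h.1.2], h.1.1⟩)
    _ ≤ _ := by
        grw [card_union_le, card_union_le, card_filter_abs_le_le_one hd]

section InnerProductSpace

variable {E : Type*} [NormedAddCommGroup E] [InnerProductSpace ℝ E]

lemma dist_lt_dist_midpoint_add_of_inner {a b p v : E} (hv : ⟪v, b - a⟫ = 0)
    (h : ‖p - midpoint ℝ a b‖ ^ 2 - ‖a - midpoint ℝ a b‖ ^ 2 <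
      2 * ⟪v, p - midpoint ℝ a b⟫) :
    dist p (midpoint ℝ a b + v) < dist a (midpoint ℝ a b + v) := by
  have ha : ⟪a - midpoint ℝ a b, v⟫ = 0 := by
    rw [left_sub_midpoint, real_inner_smul_left, ← neg_sub b a, inner_neg_left, real_inner_comm,
      hv, neg_zero, mul_zero]
  rw [dist_eq_norm, dist_eq_norm, ← sq_lt_sq₀ (norm_nonneg _) (norm_nonneg _),
    sub_add_eq_sub_sub, sub_add_eq_sub_sub, norm_sub_sq_real (p - _), norm_sub_sq_real (a - _),
    ha, real_inner_comm]
  linarith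

lemma dist_left_midpoint_add_eq_dist_right {a b v : E} (hv : ⟪v, b - a⟫ = 0) :
    dist a (midpoint ℝ a b + v) = dist b (midpoint ℝ a b + v) := by
  refine AffineSubspace.mem_perpBisector_iff_dist_eq'.1 ?_
  rw [AffineSubspace.mem_perpBisector_iff_inner_eq_zero, vsub_eq_sub, add_sub_cancel_left]
  exact hv

lemma norm_sub_sub_le_of_dist_le {a b w : E} {r : ℝ} (ha : dist a (-(1 / 2 : ℝ) • w) ≤ r)
    (hb : dist b ((1 / 2 : ℝ) • w) ≤ r) : ‖b - a - w‖ ≤ 2 * r := by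
  have : b - a - w = (b - (1 / 2 : ℝ) • w) - (a - -(1 / 2 : ℝ) • w) := by module
  rw [dist_eq_norm] at ha hb
  rw [this]
  linarith [norm_sub_le (b - (1 / 2 : ℝ) • w) (a - -(1 / 2 : ℝ) • w)]

lemma norm_midpoint_le_of_dist_le {a b w : E} {r : ℝ} (ha : dist a (-(1 / 2 : ℝ) • w) ≤ r)
    (hb : dist b ((1 / 2 : ℝ) • w) ≤ r) : ‖midpoint ℝ a b‖ ≤ r := by
  have : midpoint ℝ a b =
      (1 / 2 : ℝ) • ((a - -(1 / 2 : ℝ) • w) + (b - (1 / 2 : ℝ) • w)) := by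
    rw [midpoint_eq_smul_add, invOf_eq_inv]
    module
  rw [dist_eq_norm] at ha hb
  rw [this, norm_smul, Real.norm_of_nonneg (by norm_num)]
  linarith [norm_add_le (a - -(1 / 2 : ℝ) • w) (b - (1 / 2 : ℝ) • w)]

lemma injective_progression {c e : E} {γ : ℝ} (he : e ≠ 0) (hγ : γ ≠ 0) :
    Function.Injective fun j : ℕ => c + (j * γ) • e := by
  intro j j' h
  have := smul_left_injective ℝ he (add_left_cancel h)
  exact_mod_cast mul_right_cancel₀ hγ this

variable [DecidableEq E]

def progression (c e : E) (γ : ℝ) (m : ℕ) : Finset E :=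
  (range m).image fun j : ℕ => c + (j * γ) • e

lemma card_progression {c e : E} {γ : ℝ} (he : e ≠ 0) (hγ : γ ≠ 0) (m : ℕ) :
    #(progression c e γ m) = m := by
  rw [progression, card_image_of_injective _ (injective_progression he hγ), card_range]

lemma progression_subset_closedBall {c e : E} {γ : ℝ} (he : ‖e‖ = 1) (hγ : 0 ≤ γ)
    (m : ℕ) :
    (progression c e γ m : Set E) ⊆ closedBall c (m * γ) := by
  intro p hp
  obtain ⟨j, hj, rfl⟩ := mem_image.1 (mem_coe.1 hp)
  rw [mem_closedBall, dist_self_add_left, norm_smul, he, mul_one,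
    Real.norm_of_nonneg (by positivity)]
  gcongr
  exact_mod_cast (mem_range.1 hj).le

lemma le_card_filter_progression {c e v M : E} {γ w : ℝ} (hw : 0 ≤ w)
    (hd : 2 * w < |γ * ⟪v, e⟫|) (m : ℕ) :
    m ≤ #{p ∈ progression c e γ m | w < ⟪v, p - M⟫} +
      #{p ∈ progression c e γ m | w < -⟪v, p - M⟫} + 1 := by
  have hγ : γ ≠ 0 := by rintro rfl; simp at hd; linarith
  have he : e ≠ 0 := by rintro rfl; simp at hd; linarith
  have key (j : ℕ) :
      ⟪v, c + (j * γ) • e - M⟫ = ⟪v, c - M⟫ + j * (γ * ⟪v, e⟫) := by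
    rw [add_sub_right_comm, inner_add_right, real_inner_smul_right, mul_assoc]
  simp only [progression, filter_image, card_image_of_injective _ (injective_progression he hγ),
    key]
  exact le_card_filter_lt_add_card_filter_neg_lt hd m

end InnerProductSpace

section Plane

variable {E : Type*} [NormedAddCommGroup E] [InnerProductSpace ℝ E] [Fact (finrank ℝ E = 2)]
  (o : Orientation ℝ E (Fin 2))

local notation "J" => o.rightAngleRotation

lemma exists_closedBall_of_lt_inner_rightAngleRotation {a b q : E} {S P : Finset E} {m : ℕ}
    (hm : 0 < m) (hab₁ : 3 / 5 ≤ ‖b - a‖) (hab₂ : ‖b - a‖ ≤ 7 / 5)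
    (hM : ‖midpoint ℝ a b‖ ≤ 1 / 5) (hq : 40 * m - 1 / 5 ≤ ‖q‖) (hSP : S ⊆ P)
    (hSne : S.Nonempty)
    (hS : ∀ p ∈ S, ‖p‖ ≤ 3 / 5 ∧ 1 / (40 * m) < ⟪J (b - a), p - midpoint ℝ a b⟫) :
    ∃ z r, 0 ≤ r ∧ a ∉ closedBall z r ∧ b ∉ closedBall z r ∧ q ∉ closedBall z r ∧
      #S ≤ (closedBall z r ∩ P).ncard := by
  set M := midpoint ℝ a b
  set v := (12 * m : ℝ) • J (b - a)
  have hv : ⟪v, b - a⟫ = 0 := by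
    rw [real_inner_smul_left, o.inner_rightAngleRotation_self, mul_zero]
  have hmR : (1 : ℝ) ≤ m := by exact_mod_cast hm
  have haM : ‖a - M‖ = ‖b - a‖ / 2 := by
    rw [left_sub_midpoint, norm_smul, norm_sub_rev, invOf_eq_inv, norm_inv, Real.norm_ofNat]
    ring
  have hpa : ∀ p ∈ S, dist p (M + v) < dist a (M + v) := by
    intro p hp
    obtain ⟨hp, hpab⟩ := hS p hp
    refine dist_lt_dist_midpoint_add_of_inner hv ?_
    have hpM : ‖p - M‖ ≤ 4 / 5 := (norm_sub_le p M).trans (by linarith)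
    have h12 : 3 / 10 < 12 * m * ⟪J (b - a), p - M⟫ := by
      calc (3 / 10 : ℝ) = 12 * m * (1 / (40 * m)) := by field_simp; norm_num
        _ < _ := by gcongr
    -- `‖p - M‖² - ‖a - M‖² ≤ (4/5)² - (3/10)² < 2 · (3/10)`
    rw [real_inner_smul_left, haM]
    nlinarith [norm_nonneg (p - M)]
  have haq : dist a (M + v) < dist q (M + v) := by
    refine dist_lt_dist_of_add_two_mul_dist_lt (M := M) ?_
    rw [dist_eq_norm, dist_eq_norm, dist_eq_norm, haM, add_sub_cancel_left, norm_smul,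
      LinearIsometryEquiv.norm_map, Real.norm_of_nonneg (by positivity)]
    -- `‖a - M‖ + 2 ‖v‖ ≤ (1/2 + 24 m) · 7/5 < 40 m - 2/5 ≤ ‖q - M‖`
    nlinarith [norm_sub_norm_le q M]
  obtain ⟨r, hr, hSr, hr'⟩ :=
    exists_closedBall_of_forall_dist_lt (z := M + v) (N := {a, b, q}) hSne fun p hp x hx => by
      simp only [Set.mem_insert_iff, Set.mem_singleton_iff] at hx
      rcases hx with rfl | rfl | rfl
      · exact hpa p hp
      · rw [← dist_left_midpoint_add_eq_dist_right hv]; exact hpa p hp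
      · exact (hpa p hp).trans haq
  exact ⟨M + v, r, hr, hr' a (by simp), hr' b (by simp), hr' q (by simp),
    card_le_ncard_inter hSP hSr⟩

lemma two_fifths_lt_dist_smul_smul_rightAngleRotation {w : E} (hw : ‖w‖ = 1) {s t : ℝ}
    (hs : |s| ≤ 1 / 2) (ht : 1 ≤ t) : 2 / 5 < dist (s • w) (t • J w) := by
  have := norm_sub_norm_le (t • J w) (s • w)
  rw [norm_smul, norm_smul, LinearIsometryEquiv.norm_map, hw, norm_sub_rev, ← dist_eq_norm,
    Real.norm_eq_abs, Real.norm_eq_abs, abs_of_pos (by linarith)] at this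
  linarith

variable [DecidableEq E] (w : E) (m : ℕ)

noncomputable def cluster (c : E) : Finset E :=
  progression c (J w) (1 / (10 * m)) m

noncomputable def threeClusters : Finset E :=
  cluster o w m (-(1 / 2 : ℝ) • w) ∪ cluster o w m ((1 / 2 : ℝ) • w) ∪
    cluster o w m ((40 * m : ℝ) • J w)

variable {o w m}

lemma cluster_subset_closedBall (hw : ‖w‖ = 1) (c : E) :
    (cluster o w m c : Set E) ⊆ closedBall c (1 / 10) := by
  refine (progression_subset_closedBall (by simpa using hw) (by positivity) m).trans
    (closedBall_subset_closedBall ?_)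
  rw [mul_one_div, mul_comm, ← div_div]
  exact div_le_div_of_nonneg_right (div_self_le_one _) (by norm_num)

lemma card_cluster (hw : ‖w‖ = 1) (hm : 0 < m) (c : E) : #(cluster o w m c) = m :=
  card_progression (by simp [← norm_ne_zero_iff, hw]) (by positivity) m

lemma disjoint_cluster (hw : ‖w‖ = 1) {c c' : E} (h : 1 / 5 < dist c c') :
    Disjoint (cluster o w m c) (cluster o w m c') := by
  rw [← disjoint_coe]
  exact (closedBall_disjoint_closedBall (by linarith)).mono
    (cluster_subset_closedBall hw c) (cluster_subset_closedBall hw c')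

lemma disjoint_cluster_neg_half_half (hw : ‖w‖ = 1) :
    Disjoint (cluster o w m (-(1 / 2 : ℝ) • w)) (cluster o w m ((1 / 2 : ℝ) • w)) :=
  disjoint_cluster hw (by rw [dist_eq_norm, ← sub_smul, norm_smul, hw]; norm_num)

lemma card_threeClusters (hw : ‖w‖ = 1) (hm : 0 < m) : #(threeClusters o w m) = 3 * m := by
  have hmR : (1 : ℝ) ≤ m := by exact_mod_cast hm
  have hfar (s : ℝ) (hs : |s| = 1 / 2) : 1 / 5 < dist (s • w) ((40 * m : ℝ) • J w) :=
    (two_fifths_lt_dist_smul_smul_rightAngleRotation o hw hs.le (by linarith)).trans' (by norm_num)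
  have h2 := disjoint_union_left.2
    ⟨disjoint_cluster (o := o) (m := m) hw (hfar (-(1 / 2)) (by norm_num)),
      disjoint_cluster (o := o) (m := m) hw (hfar (1 / 2) (by norm_num))⟩
  rw [threeClusters, card_union_of_disjoint h2,
    card_union_of_disjoint (disjoint_cluster_neg_half_half hw), card_cluster hw hm,
    card_cluster hw hm, card_cluster hw hm]
  ring

lemma norm_le_of_mem_cluster_union (hw : ‖w‖ = 1) {p : E}
    (hp : p ∈ cluster o w m (-(1 / 2 : ℝ) • w) ∪ cluster o w m ((1 / 2 : ℝ) • w)) :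
    ‖p‖ ≤ 3 / 5 := by
  have hc (s : ℝ) (hs : |s| = 1 / 2) (hp : p ∈ cluster o w m (s • w)) :
      ‖p‖ ≤ 3 / 5 := by
    have := norm_le_of_mem_closedBall (cluster_subset_closedBall hw _ (mem_coe.2 hp))
    rw [norm_smul, hw, Real.norm_eq_abs, hs] at this
    linarith
  rcases mem_union.1 hp with hp | hp
  · exact hc _ (by norm_num) hp
  · exact hc _ (by norm_num) hp

lemma le_card_filter_cluster (hw : ‖w‖ = 1) (hm : 0 < m) {u : E} (hu : ‖u - w‖ ≤ 2 / 5)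
    (M c : E) :
    m ≤ #{p ∈ cluster o w m c | 1 / (40 * m) < ⟪J u, p - M⟫} +
      #{p ∈ cluster o w m c | 1 / (40 * m) < -⟪J u, p - M⟫} + 1 := by
  refine le_card_filter_progression (by positivity) ?_ m
  have huw : 3 / 5 ≤ ⟪u, w⟫ := by
    have h := real_inner_le_norm (w - u) w
    rw [norm_sub_rev, hw, inner_sub_left, real_inner_self_eq_norm_sq, hw] at h
    linarith
  rw [LinearIsometryEquiv.inner_map_map, abs_of_pos (by positivity)]
  calc (2 : ℝ) * (1 / (40 * m)) < 1 / (10 * m) * (3 / 5) := by field_simp; norm_num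
    _ ≤ _ := by gcongr

lemma le_card_filter_add_card_filter_cluster_union (hw : ‖w‖ = 1) (hm : 0 < m) {u : E}
    (hu : ‖u - w‖ ≤ 2 / 5) (M : E) :
    2 * m ≤ #{p ∈ cluster o w m (-(1 / 2 : ℝ) • w) ∪ cluster o w m ((1 / 2 : ℝ) • w) |
        1 / (40 * m) < ⟪J u, p - M⟫} +
      #{p ∈ cluster o w m (-(1 / 2 : ℝ) • w) ∪ cluster o w m ((1 / 2 : ℝ) • w) |
        1 / (40 * m) < -⟪J u, p - M⟫} + 2 := by
  have h01 := disjoint_cluster_neg_half_half (o := o) (m := m) hw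
  rw [filter_union, filter_union, card_union_of_disjoint (disjoint_filter_filter h01),
    card_union_of_disjoint (disjoint_filter_filter h01)]
  have := le_card_filter_cluster (o := o) hw hm hu M (-(1 / 2 : ℝ) • w)
  have := le_card_filter_cluster (o := o) hw hm hu M ((1 / 2 : ℝ) • w)
  omega

lemma exists_closedBall_of_dist_le (hw : ‖w‖ = 1) (hm : 1 < m) {a b q : E}
    (ha : dist a (-(1 / 2 : ℝ) • w) ≤ 1 / 5) (hb : dist b ((1 / 2 : ℝ) • w) ≤ 1 / 5)
    (hq : dist q ((40 * m : ℝ) • J w) ≤ 1 / 5) :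
    ∃ z r, 0 ≤ r ∧ a ∉ closedBall z r ∧ b ∉ closedBall z r ∧ q ∉ closedBall z r ∧
      m ≤ (closedBall z r ∩ threeClusters o w m).ncard + 1 := by
  have hm0 : 0 < m := by omega
  have hu : ‖b - a - w‖ ≤ 2 / 5 := by linarith [norm_sub_sub_le_of_dist_le ha hb]
  have hM := norm_midpoint_le_of_dist_le ha hb
  have hab := abs_le.1 ((abs_norm_sub_norm_le (b - a) w).trans hu)
  have hq' : 40 * m - 1 / 5 ≤ ‖q‖ := by
    have := norm_sub_norm_le ((40 * m : ℝ) • J w) q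
    rw [norm_smul, LinearIsometryEquiv.norm_map, hw, ← dist_eq_norm, dist_comm,
      Real.norm_of_nonneg (by positivity)] at this
    linarith
  have hcount :=
    le_card_filter_add_card_filter_cluster_union (o := o) hw hm0 hu (midpoint ℝ a b)
  set C := cluster o w m (-(1 / 2 : ℝ) • w) ∪ cluster o w m ((1 / 2 : ℝ) • w)
  set S₁ := {p ∈ C | 1 / (40 * m) < ⟪J (b - a), p - midpoint ℝ a b⟫}
  set S₂ := {p ∈ C | 1 / (40 * m) < -⟪J (b - a), p - midpoint ℝ a b⟫}
  have hCP : C ⊆ threeClusters o w m := subset_union_left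
  rcases (by omega : m ≤ #S₁ + 1 ∨ m ≤ #S₂ + 1) with h | h
  · obtain ⟨z, r, hr, ha', hb', hq'', hS⟩ := exists_closedBall_of_lt_inner_rightAngleRotation o
      (S := S₁) hm0 (by linarith) (by linarith) hM hq' ((filter_subset _ _).trans hCP)
      (card_pos.1 (by omega))
      fun p hp => ⟨norm_le_of_mem_cluster_union hw (mem_filter.1 hp).1, (mem_filter.1 hp).2⟩
    exact ⟨z, r, hr, ha', hb', hq'', by omega⟩
  · obtain ⟨z, r, hr, hb', ha', hq'', hS⟩ := exists_closedBall_of_lt_inner_rightAngleRotation o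
      (a := b) (b := a) (S := S₂) hm0 (by rw [norm_sub_rev]; linarith)
      (by rw [norm_sub_rev]; linarith) (by rwa [midpoint_comm]) hq'
      ((filter_subset _ _).trans hCP) (card_pos.1 (by omega))
      fun p hp => ⟨norm_le_of_mem_cluster_union hw (mem_filter.1 hp).1, by
        rw [midpoint_comm, ← neg_sub b a, map_neg, inner_neg_left]
        exact (mem_filter.1 hp).2⟩
    exact ⟨z, r, hr, ha', hb', hq'', by omega⟩

theorem exists_closedBall_notMem_and_le_ncard (hw : ‖w‖ = 1) (hm : 1 < m) {N : Finset E}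
    (hN : #N ≤ 3) :
    ∃ z r, 0 ≤ r ∧ (∀ q ∈ N, q ∉ closedBall z r) ∧
      m ≤ (closedBall z r ∩ threeClusters o w m).ncard + 1 := by
  set c₀ := -(1 / 2 : ℝ) • w
  set c₁ := (1 / 2 : ℝ) • w
  set c₂ := (40 * m : ℝ) • J w
  by_cases hiso : ∃ c ∈ ({c₀, c₁, c₂} : Finset E), ∀ q ∈ N, q ∉ closedBall c (1 / 5)
  · obtain ⟨c, hc, hcN⟩ := hiso
    have hcP : cluster o w m c ⊆ threeClusters o w m := by
      simp only [mem_insert, mem_singleton] at hc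
      rcases hc with rfl | rfl | rfl
      · exact subset_union_left.trans subset_union_left
      · exact subset_union_right.trans subset_union_left
      · exact subset_union_right
    have := card_le_ncard_inter hcP (cluster_subset_closedBall hw c)
    rw [card_cluster hw (by omega)] at this
    exact ⟨c, 1 / 10, by norm_num,
      fun q hq hqc => hcN q hq (closedBall_subset_closedBall (by norm_num) hqc), by omega⟩
  push Not at hiso
  obtain ⟨a, haN, ha⟩ := hiso c₀ (by simp)
  obtain ⟨b, hbN, hb⟩ := hiso c₁ (by simp)
  obtain ⟨q, hqN, hq⟩ := hiso c₂ (by simp)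
  have hsep : ∀ {x y c c' : E}, x ∈ closedBall c (1 / 5) → y ∈ closedBall c' (1 / 5) →
      2 / 5 < dist c c' → x ≠ y := fun hx hy hcc' =>
    (closedBall_disjoint_closedBall (by linarith)).ne_of_mem hx hy
  have hmR : (1 : ℝ) ≤ m := by exact_mod_cast hm.le
  have hfar (s : ℝ) (hs : |s| = 1 / 2) : 2 / 5 < dist (s • w) c₂ :=
    two_fifths_lt_dist_smul_smul_rightAngleRotation o hw hs.le (by linarith)
  have hNabq : N = {a, b, q} := by
    refine (eq_of_subset_of_card_le (by simp [insert_subset_iff, haN, hbN, hqN]) ?_).symm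
    rw [card_eq_three.2 ⟨a, b, q, hsep ha hb ?_, hsep ha hq (hfar _ (by norm_num)),
      hsep hb hq (hfar _ (by norm_num)), rfl⟩]
    · exact hN
    · rw [dist_eq_norm, ← sub_smul, norm_smul, hw]; norm_num
  obtain ⟨z, r, hr, ha', hb', hq', hcard⟩ := exists_closedBall_of_dist_le hw hm ha hb hq
  refine ⟨z, r, hr, fun x hx => ?_, hcard⟩
  simp only [hNabq, mem_insert, mem_singleton] at hx
  rcases hx with rfl | rfl | rfl <;> assumption

end Plane

theorem weak_epsD_three_lower_general (ε : ℝ) (hε : ε < 1 / 3) :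
    ∃ P : Finset (EuclideanSpace ℝ (Fin 2)),
      ∀ N : Finset (EuclideanSpace ℝ (Fin 2)), N.card ≤ 3 →
        ∃ D : Set (EuclideanSpace ℝ (Fin 2)), IsDisk D ∧ (∀ q ∈ N, q ∉ D) ∧
          ε * P.card < ((D ∩ ↑P).ncard : ℝ) := by
  obtain ⟨m, hm⟩ := exists_nat_gt (max 1 (1 / (1 - 3 * ε)))
  have hm1 : 1 < m := by exact_mod_cast (le_max_left _ _).trans_lt hm
  have hm' : 1 < (1 - 3 * ε) * m := by
    rw [← div_lt_iff₀' (by linarith)]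
    exact (le_max_right _ _).trans_lt hm
  have : Fact (finrank ℝ (EuclideanSpace ℝ (Fin 2)) = 2) := ⟨finrank_euclideanSpace_fin⟩
  let o := (EuclideanSpace.basisFun (Fin 2) ℝ).toBasis.orientation
  set w := EuclideanSpace.single (0 : Fin 2) (1 : ℝ)
  have hw : ‖w‖ = 1 := by simp [w]
  refine ⟨threeClusters o w m, fun N hN => ?_⟩
  obtain ⟨z, r, hr, hNz, hcard⟩ := exists_closedBall_notMem_and_le_ncard (o := o) hw hm1 hN
  refine ⟨closedBall z r, ⟨z, r, hr, rfl⟩, hNz, ?_⟩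
  have hcard' : (m : ℝ) ≤ (closedBall z r ∩ threeClusters o w m).ncard + 1 := by
    exact_mod_cast hcard
  rw [card_threeClusters hw (by omega)]
  push_cast
  linarith

/-- Lower bound for weak ε-nets: no weak ε-net of size 3 with ε < 1/3 exists for
closed disks, i.e. ε_3^D ≥ 1/3 for weak ε-nets. -/
theorem weak_epsD_three_lower (ε : ℝ) (hε0 : 0 ≤ ε) (hε : ε < 1 / 3) :
    ∃ P : Finset (EuclideanSpace ℝ (Fin 2)),
      ∀ N : Finset (EuclideanSpace ℝ (Fin 2)), N.card ≤ 3 →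
        ∃ D : Set (EuclideanSpace ℝ (Fin 2)), IsDisk D ∧ (∀ q ∈ N, q ∉ D) ∧
          ε * P.card < ((D ∩ ↑P).ncard : ℝ) :=
  weak_epsD_three_lower_general ε hε
end

section
/- For every integer i ≥ 2 and every real number ε with 0 ≤ ε < 1/i, there exists a finite set P ⊂ ℝ² such that for every set N ⊆ ℝ² with |N| ≤ i there exists a closed disk D with D ∩ N = ∅ and |D ∩ P| > ε·|P|. Hence ε_i^D ≥ 1/i for weak ε-nets with respect to disks, for all i ≥ 2. -/
open Metric Finset
open scoped Real RealInnerProductSpace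

section Angles

open Real

lemma cos_le_cos_of_le_of_le_two_pi_sub {c x : ℝ} (hc : 0 ≤ c) (hcx : c ≤ x)
    (hx : x ≤ 2 * π - c) : cos x ≤ cos c := by
  rcases le_total x π with hxπ | hπx
  · exact cos_le_cos_of_nonneg_of_le_pi hc hxπ hcx
  · rw [← cos_two_pi_sub]
    exact cos_le_cos_of_nonneg_of_le_pi hc (by linarith) (by linarith)

/-- Each `f β` with `β ≠ β₀` lies strictly inside at most one of the intervals `(k, k + 1)`. -/
lemma exists_lt_forall_le_or_add_one_le {ι : Type*} {B : Finset ι} {i : ℕ} (hB : B.card ≤ i)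
    {f : ι → ℝ} (hf : ∀ β ∈ B, 0 ≤ f β) {β₀ : ι} (hβ₀ : β₀ ∈ B) (hfβ₀ : f β₀ = 0) :
    ∃ k < i, ∀ β ∈ B, f β ≤ k ∨ k + 1 ≤ f β := by
  classical
  obtain ⟨k, hk, hkfree⟩ : ∃ k ∈ range i, k ∉ (B.erase β₀).image fun β ↦ ⌊f β⌋₊ := by
    refine exists_mem_notMem_of_card_lt_card (card_image_le.trans_lt ?_)
    rw [card_erase_of_mem hβ₀, card_range]
    have := (B.card_pos.2 ⟨β₀, hβ₀⟩).trans_le hB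
    omega
  refine ⟨k, mem_range.1 hk, fun β hβ ↦ ?_⟩
  rcases eq_or_ne β β₀ with rfl | hne
  · simp [hfβ₀]
  have hfl : ⌊f β⌋₊ ≠ k := fun h ↦ hkfree (mem_image.2 ⟨β, mem_erase.2 ⟨hne, hβ⟩, h⟩)
  rcases lt_or_gt_of_ne hfl with h | h
  · exact .inl ((Nat.floor_lt (hf β hβ)).1 h).le
  · exact .inr (by exact_mod_cast (Nat.floor_le (hf β hβ)).trans' (Nat.cast_le.2 h))

/-- Cut the circle into `i` sectors of width `2π / i` starting at some `β₀ ∈ B`; the midpoint of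
a sector containing no point of `B` in its interior is the required direction. -/
lemma exists_forall_cos_sub_le_cos_pi_div {i : ℕ} (B : Finset ℝ) (hB : B.card ≤ i) :
    ∃ α, ∀ β ∈ B, cos (α - β) ≤ cos (π / i) := by
  rcases B.eq_empty_or_nonempty with rfl | ⟨β₀, hβ₀⟩
  · exact ⟨0, by simp⟩
  have hiR : (0 : ℝ) < i := by exact_mod_cast (B.card_pos.2 ⟨β₀, hβ₀⟩).trans_le hB
  set u : ℝ → ℝ := fun β ↦ Int.fract ((β - β₀) / (2 * π)) with hu
  obtain ⟨k, hk, hsector⟩ := exists_lt_forall_le_or_add_one_le hB (f := fun β ↦ i * u β)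
    (fun β _ ↦ mul_nonneg hiR.le (Int.fract_nonneg _)) hβ₀ (by simp [hu])
  have hki : (k : ℝ) + 1 ≤ i := by exact_mod_cast hk
  refine ⟨β₀ + (2 * k + 1) * π / i, fun β hβ ↦ ?_⟩
  set a := π / i
  have ha : 0 < a := by positivity
  have hai : a * i = π := div_mul_cancel₀ _ hiR.ne'
  have hsplit : β₀ + (2 * k + 1) * π / i - β
      = a * (2 * k + 1 - 2 * i * u β) - ⌊(β - β₀) / (2 * π)⌋ * (2 * π) := by
    have hβ : β = β₀ + 2 * π * (⌊(β - β₀) / (2 * π)⌋ + u β) := by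
      rw [hu, Int.floor_add_fract]; field_simp; ring
    conv_lhs => rw [hβ]
    rw [← hai]
    field_simp
    ring
  have h2π : 2 * π = a * (2 * i) := by rw [← hai]; ring
  have hiu : 0 ≤ i * u β := mul_nonneg hiR.le (Int.fract_nonneg _)
  have hiu' : i * u β < i := mul_lt_of_lt_one_right hiR (Int.fract_lt_one _)
  rw [hsplit, cos_sub_int_mul_two_pi]
  rcases hsector β hβ with h | h
  · apply cos_le_cos_of_le_of_le_two_pi_sub ha.le
    · exact le_mul_of_one_le_right ha.le (by linarith)
    · rw [h2π, ← mul_sub_one]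
      exact mul_le_mul_of_nonneg_left (by linarith) ha.le
  · rw [← cos_add_two_pi, h2π, ← mul_add]
    apply cos_le_cos_of_le_of_le_two_pi_sub ha.le
    · exact le_mul_of_one_le_right ha.le (by linarith)
    · rw [h2π, ← mul_sub_one]
      exact mul_le_mul_of_nonneg_left (by linarith) ha.le

end Angles

lemma exists_int_forall_abs_mul_sub_le {s d : ℝ} {m : ℕ} (hs : 0 < s) (hm : m * s ≤ 2 * d)
    (α : ℝ) : ∃ k : ℤ, ∀ j < m, |(k + j) * s - α| ≤ d := by
  refine ⟨⌈(α - d) / s⌉, fun j hj ↦ abs_le.2 ⟨?_, ?_⟩⟩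
  · have := Int.le_ceil ((α - d) / s)
    rw [div_le_iff₀ hs] at this
    nlinarith
  · have h1 := mul_lt_mul_of_pos_right (Int.ceil_lt_add_one ((α - d) / s)) hs
    rw [add_mul, div_mul_cancel₀ _ hs.ne'] at h1
    have hj1 : (j : ℝ) + 1 ≤ m := by exact_mod_cast hj
    nlinarith

lemma exists_nat_mul_lt_le_mul {ε η : ℝ} (hε : 0 ≤ ε) (hεη : ε < η) :
    ∃ n m : ℕ, 0 < n ∧ ε * n < m ∧ (m : ℝ) ≤ η * n := by
  have hpos : 0 < η - ε := sub_pos.2 hεη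
  set n := ⌈(η - ε)⁻¹⌉₊
  refine ⟨n, ⌊ε * n⌋₊ + 1, Nat.ceil_pos.2 (inv_pos.2 hpos),
    by exact_mod_cast Nat.lt_floor_add_one _, ?_⟩
  have hfloor : (⌊ε * n⌋₊ : ℝ) ≤ ε * n := Nat.floor_le (by positivity)
  have hn : 1 ≤ (η - ε) * n := by
    simpa [hpos.ne'] using mul_le_mul_of_nonneg_left (Nat.le_ceil (η - ε)⁻¹) hpos.le
  push_cast
  linarith

section CapBall

variable {E : Type*} [NormedAddCommGroup E] [InnerProductSpace ℝ E] {u v : E} {T c : ℝ}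

lemma mem_closedBall_smul_iff (hu : ‖u‖ = 1) (hT : 1 ≤ T) :
    v ∈ closedBall (T • u) √(T ^ 2 - 1) ↔ ‖v‖ ^ 2 + 1 ≤ 2 * T * ⟪v, u⟫ := by
  have hr : 0 ≤ T ^ 2 - 1 := by nlinarith
  rw [mem_closedBall, dist_eq_norm, ← sq_le_sq₀ (norm_nonneg _) (Real.sqrt_nonneg _),
    Real.sq_sqrt hr, norm_sub_sq_real, real_inner_smul_right, norm_smul, hu,
    Real.norm_of_nonneg (by linarith)]
  constructor <;> intro h <;> nlinarith

lemma mem_closedBall_smul_of_norm_eq_one (hu : ‖u‖ = 1) (hT : 1 ≤ T) (hv : ‖v‖ = 1)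
    (h : 1 ≤ T * ⟪v, u⟫) : v ∈ closedBall (T • u) √(T ^ 2 - 1) := by
  rw [mem_closedBall_smul_iff hu hT, hv]
  linarith

lemma notMem_closedBall_smul_of_inner_le (hu : ‖u‖ = 1) (hT : 1 ≤ T) (hc : T * c < 1)
    (hv : ⟪v, u⟫ ≤ c * ‖v‖) : v ∉ closedBall (T • u) √(T ^ 2 - 1) := by
  rw [mem_closedBall_smul_iff hu hT]
  intro h
  have : 2 * T * ⟪v, u⟫ ≤ 2 * (T * c) * ‖v‖ := by nlinarith
  -- `‖v‖² + 1 - 2Tc‖v‖ = (‖v‖ - 1)² + 2(1 - Tc)‖v‖` is positive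
  have hs : 0 < 1 - T * c := by linarith
  nlinarith [mul_nonneg hs.le (sq_nonneg (‖v‖ - 1)), mul_nonneg hs.le (norm_nonneg v)]

end CapBall

section UnitCircle

open Complex

lemma real_inner_exp_mul_I (θ α : ℝ) : ⟪exp (θ * I), exp (α * I)⟫ = Real.cos (α - θ) := by
  rw [Complex.inner, ← exp_conj, map_mul, conj_ofReal, conj_I, ← exp_add]
  convert exp_ofReal_mul_I_re (α - θ) using 3
  push_cast; ring

lemma real_inner_exp_mul_I_right (q : ℂ) (α : ℝ) :
    ⟪q, exp (α * I)⟫ = ‖q‖ * Real.cos (α - arg q) := by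
  conv_lhs => rw [← norm_mul_exp_arg_mul_I q, ← real_smul, real_inner_smul_left]
  rw [real_inner_exp_mul_I]

lemma exp_mul_I_mem_closedBall {θ α d : ℝ} (hd : d ≤ π) (hcos : 0 < Real.cos d)
    (hθ : |θ - α| ≤ d) :
    exp (θ * I) ∈ closedBall ((Real.cos d)⁻¹ • exp (α * I)) √((Real.cos d)⁻¹ ^ 2 - 1) := by
  refine mem_closedBall_smul_of_norm_eq_one (norm_exp_ofReal_mul_I α)
    (one_le_inv₀ hcos |>.2 (Real.cos_le_one d)) (norm_exp_ofReal_mul_I θ) ?_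
  rw [real_inner_exp_mul_I, ← Real.cos_abs (α - θ), abs_sub_comm, ← div_eq_inv_mul,
    one_le_div₀ hcos]
  exact Real.cos_le_cos_of_nonneg_of_le_pi (abs_nonneg _) hd hθ

lemma notMem_closedBall_of_cos_sub_arg_le {q : ℂ} {α c d : ℝ} (hcos : 0 < Real.cos d)
    (hc : c < Real.cos d) (hq : Real.cos (α - arg q) ≤ c) :
    q ∉ closedBall ((Real.cos d)⁻¹ • exp (α * I)) √((Real.cos d)⁻¹ ^ 2 - 1) := by
  refine notMem_closedBall_smul_of_inner_le (c := c) (norm_exp_ofReal_mul_I α)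
    (one_le_inv₀ hcos |>.2 (Real.cos_le_one d)) ?_ ?_
  · rwa [← div_eq_inv_mul, div_lt_one hcos]
  · rw [real_inner_exp_mul_I_right, mul_comm]
    exact mul_le_mul_of_nonneg_right hq (norm_nonneg q)

open Polynomial in
lemma le_ncard_inter_nthRootsFinset {n m : ℕ} (hn : 0 < n) (hmn : m ≤ n) {α d : ℝ}
    (hm : m * (2 * π / n) ≤ 2 * d) {S : Set ℂ}
    (hS : ∀ θ : ℝ, |θ - α| ≤ d → exp (θ * I) ∈ S) :
    m ≤ (S ∩ nthRootsFinset n (1 : ℂ)).ncard := by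
  set ζ := exp (2 * π * I / n)
  have hζ : IsPrimitiveRoot ζ n := isPrimitiveRoot_exp n hn.ne'
  have hζ0 : ζ ≠ 0 := exp_ne_zero _
  obtain ⟨k, hk⟩ := exists_int_forall_abs_mul_sub_le (by positivity) hm α
  set f : ℕ → ℂ := fun j ↦ ζ ^ (k + j)
  have hf : ∀ j, f j = exp (((k + j) * (2 * π / n) : ℝ) * I) := fun j ↦ by
    simp only [f, ζ, ← exp_int_mul]; push_cast; ring_nf
  have hmaps : ∀ j ∈ range m, f j ∈ S ∩ nthRootsFinset n (1 : ℂ) := fun j hj ↦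
    ⟨hf j ▸ hS _ (hk j (mem_range.1 hj)), (mem_nthRootsFinset hn 1).2 <| by
      rw [← zpow_natCast, ← zpow_mul, mul_comm, zpow_mul, zpow_natCast, hζ.pow_eq_one, one_zpow]⟩
  have hinj : Set.InjOn f (range m) := fun j hj j' hj' h ↦ by
    simp only [f, zpow_add₀ hζ0, zpow_natCast] at h
    exact hζ.pow_inj ((mem_range.1 hj).trans_le hmn) ((mem_range.1 hj').trans_le hmn)
      (mul_left_cancel₀ (zpow_ne_zero _ hζ0) h)
  calc m = ((range m).image f).card := by rw [card_image_of_injOn hinj, card_range]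
    _ = (((range m).image f : Finset ℂ) : Set ℂ).ncard := (Set.ncard_coe_finset _).symm
    _ ≤ (S ∩ nthRootsFinset n (1 : ℂ)).ncard := by
      refine Set.ncard_le_ncard (fun z hz ↦ ?_) ((nthRootsFinset n 1).finite_toSet.subset
        Set.inter_subset_right)
      obtain ⟨j, hj, rfl⟩ := mem_image.1 hz
      exact hmaps j hj

end UnitCircle

def ExistsFinsetWithoutWeakNet (X : Type*) [PseudoMetricSpace X] (i : ℕ) (ε : ℝ) : Prop :=
  ∃ P : Finset X, ∀ N : Finset X, N.card ≤ i →
    ∃ c r, 0 ≤ r ∧ (∀ q ∈ N, q ∉ closedBall c r) ∧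
      ε * P.card < ((closedBall c r ∩ ↑P).ncard : ℝ)

lemma ExistsFinsetWithoutWeakNet.of_isometryEquiv {X Y : Type*} [PseudoMetricSpace X]
    [PseudoMetricSpace Y] {i : ℕ} {ε : ℝ} (e : X ≃ᵢ Y) (h : ExistsFinsetWithoutWeakNet X i ε) :
    ExistsFinsetWithoutWeakNet Y i ε := by
  obtain ⟨P, hP⟩ := h
  refine ⟨P.map e.toEquiv.toEmbedding, fun N hN ↦ ?_⟩
  obtain ⟨c, r, hr, hNc, hcount⟩ := hP (N.map e.symm.toEquiv.toEmbedding) (by rwa [card_map])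
  refine ⟨e c, r, hr, fun q hq hqc ↦ hNc (e.symm q) (mem_map_of_mem _ hq) ?_, ?_⟩
  · rwa [mem_closedBall, ← e.dist_eq, e.apply_symm_apply]
  · rwa [card_map, coe_map, Equiv.coe_toEmbedding, IsometryEquiv.coe_toEquiv,
      ← e.image_closedBall, ← Set.image_inter e.injective,
      Set.ncard_image_of_injective _ e.injective]

open Complex Polynomial in
theorem existsFinsetWithoutWeakNet_complex {i : ℕ} (hi : 2 ≤ i) {ε : ℝ} (hε0 : 0 ≤ ε)
    (hε : ε < 1 / i) : ExistsFinsetWithoutWeakNet ℂ i ε := by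
  have hi' : (1 : ℝ) / i ≤ 1 / 2 := one_div_le_one_div_of_le two_pos (by exact_mod_cast hi)
  set η := (1 / i + ε) / 2 with hη
  obtain ⟨n, m, hn, hεm, hmη⟩ := exists_nat_mul_lt_le_mul hε0 (show ε < η by linarith)
  have hnR : (0 : ℝ) < n := by exact_mod_cast hn
  have hmn : m ≤ n := by
    exact_mod_cast hmη.trans (mul_le_of_le_one_left hnR.le (by linarith))
  set d := π * η
  have hd0 : 0 ≤ d := by positivity
  have hdi : d < π / i :=
    calc π * η < π * (1 / i) := by gcongr; linarith
      _ = π / i := mul_one_div _ _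
  have hπi : π / i ≤ π / 2 :=
    div_le_div_of_nonneg_left Real.pi_pos.le two_pos (by exact_mod_cast hi)
  have hcos : Real.cos (π / i) < Real.cos d :=
    Real.cos_lt_cos_of_nonneg_of_le_pi hd0 (by linarith [Real.pi_pos]) hdi
  have hcos_pos : 0 < Real.cos d := Real.cos_pos_of_mem_Ioo ⟨by linarith [Real.pi_pos], by linarith⟩
  have hm : m * (2 * π / n) ≤ 2 * d := by
    calc m * (2 * π / n) ≤ η * n * (2 * π / n) := by gcongr
      _ = 2 * d := by field_simp; ring
  refine ⟨nthRootsFinset n (1 : ℂ), fun N hN ↦ ?_⟩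
  obtain ⟨α, hα⟩ := exists_forall_cos_sub_le_cos_pi_div (N.image arg) (card_image_le.trans hN)
  refine ⟨_, _, Real.sqrt_nonneg _, fun q hq ↦ notMem_closedBall_of_cos_sub_arg_le hcos_pos hcos
    (hα _ (mem_image_of_mem _ hq)), ?_⟩
  calc ε * (nthRootsFinset n (1 : ℂ)).card = ε * n := by
        rw [(isPrimitiveRoot_exp n hn.ne').card_nthRootsFinset]
    _ < m := hεm
    _ ≤ _ := by
      exact_mod_cast le_ncard_inter_nthRootsFinset hn hmn hm fun θ hθ ↦
        exp_mul_I_mem_closedBall (by linarith [Real.pi_pos]) hcos_pos hθ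

/-- Lower bound for weak ε-nets: for every `i ≥ 2`, no weak ε-net of size `i` with
`ε < 1/i` exists for closed disks, i.e. `ε_i^D ≥ 1/i` for weak ε-nets. -/
theorem weak_epsD_general_lower (i : ℕ) (hi : 2 ≤ i) (ε : ℝ) (hε0 : 0 ≤ ε)
    (hε : ε < 1 / (i : ℝ)) :
    ∃ P : Finset (EuclideanSpace ℝ (Fin 2)),
      ∀ N : Finset (EuclideanSpace ℝ (Fin 2)), N.card ≤ i →
        ∃ D : Set (EuclideanSpace ℝ (Fin 2)), IsDisk D ∧ (∀ q ∈ N, q ∉ D) ∧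
          ε * P.card < ((D ∩ ↑P).ncard : ℝ) := by
  obtain ⟨P, hP⟩ := (existsFinsetWithoutWeakNet_complex hi hε0 hε).of_isometryEquiv
    Complex.orthonormalBasisOneI.repr.toIsometryEquiv
  refine ⟨P, fun N hN ↦ ?_⟩
  obtain ⟨c, r, hr, hN, hcount⟩ := hP N hN
  exact ⟨closedBall c r, ⟨c, r, hr, rfl⟩, hN, hcount⟩
end

section
/- For every integer i ≥ 4 and every real number ε with 0 ≤ ε < 1/i, there exists a finite set P ⊂ ℝ² such that for every set N ⊆ ℝ² with |N| ≤ i there exists an axis-parallel rectangle R with R ∩ N = ∅ and |R ∩ P| > ε·|P|. Hence ε_i^R ≥ 1/i for weak ε-nets with respect to axis-parallel rectangles, for all i ≥ 4. -/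
noncomputable def pt2 (a b : ℝ) : EuclideanSpace ℝ (Fin 2) :=
  (WithLp.equiv 2 (Fin 2 → ℝ)).symm ![a, b]

lemma pt2_zero (a b : ℝ) : pt2 a b 0 = a := rfl
lemma pt2_one (a b : ℝ) : pt2 a b 1 = b := rfl

noncomputable def cX : ℕ → ℝ
  | 0 => 10
  | 1 => 0
  | 2 => -10
  | 3 => 0
  | n+4 => -10 * ((n : ℝ) + 4)

noncomputable def cY : ℕ → ℝ
  | 0 => 0
  | 1 => 10
  | 2 => 0
  | 3 => -10
  | n+4 => 10 * ((n : ℝ) + 4)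

lemma boxes_disjoint {c c' : ℕ} {p : EuclideanSpace ℝ (Fin 2)}
    (h1 : cX c ≤ p 0 ∧ p 0 ≤ cX c + 1 ∧ cY c ≤ p 1 ∧ p 1 ≤ cY c + 1)
    (h2 : cX c' ≤ p 0 ∧ p 0 ≤ cX c' + 1 ∧ cY c' ≤ p 1 ∧ p 1 ≤ cY c' + 1) :
    c = c' := by
  obtain ⟨a1, a2, a3, a4⟩ := h1
  obtain ⟨b1, b2, b3, b4⟩ := h2
  by_contra hne
  rcases c with _|_|_|_|n <;> rcases c' with _|_|_|_|n' <;>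
    simp only [cX, cY] at a1 a2 a3 a4 b1 b2 b3 b4 <;>
    first
      | exact hne rfl
      | linarith
      | (have hn0 : (0:ℝ) ≤ (n:ℝ) := Nat.cast_nonneg n; linarith)
      | (have hn0 : (0:ℝ) ≤ (n':ℝ) := Nat.cast_nonneg n'; linarith)
      | (have hnn' : n ≠ n' := fun h => hne (by rw [h])
         rcases lt_or_gt_of_ne hnn' with h | h
         · have hcast : (n:ℝ) + 1 ≤ (n':ℝ) := by exact_mod_cast h
           linarith
         · have hcast : (n':ℝ) + 1 ≤ (n:ℝ) := by exact_mod_cast h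
           linarith)

set_option maxHeartbeats 4000000 in
/-- Lower bound for weak ε-nets with respect to axis-parallel rectangles: for every
`i ≥ 4`, no weak ε-net of size `i` with `ε < 1/i` exists, i.e. `ε_i^R ≥ 1/i` for
weak ε-nets. -/
theorem weak_epsR_general_lower (i : ℕ) (hi : 4 ≤ i) (ε : ℝ) (hε0 : 0 ≤ ε)
    (hε : ε < 1 / (i : ℝ)) :
    ∃ P : Finset (EuclideanSpace ℝ (Fin 2)),
      ∀ N : Finset (EuclideanSpace ℝ (Fin 2)), N.card ≤ i →
        ∃ R : Set (EuclideanSpace ℝ (Fin 2)), IsRect R ∧ (∀ q ∈ N, q ∉ R) ∧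
          ε * P.card < ((R ∩ ↑P).ncard : ℝ) := by
  classical
  have hi4R : (4:ℝ) ≤ (i:ℝ) := by exact_mod_cast hi
  have hiR : (0:ℝ) < i := by linarith
  have hεi : ε * i < 1 := by
    have h := mul_lt_mul_of_pos_right hε hiR
    rwa [one_div, inv_mul_cancel₀ (ne_of_gt hiR)] at h
  have hθ : 0 < 1 - ε * i := by linarith
  obtain ⟨m, hm⟩ := exists_nat_gt (1 / (1 - ε * i))
  have hmR : (0:ℝ) < m := lt_trans (by positivity) hm
  have hm0 : 0 < m := by exact_mod_cast hmR
  have hkey : ε * ((i:ℝ) * m) < (m:ℝ) - 1 := by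
    have h2 : 1 / (1 - ε * i) * (1 - ε * i) < (m:ℝ) * (1 - ε * i) :=
      mul_lt_mul_of_pos_right hm hθ
    rw [div_mul_cancel₀ 1 (ne_of_gt hθ)] at h2
    nlinarith
  set η : ℝ := 1 / (4 * m) with hηdef
  have hη0 : 0 < η := by positivity
  have hη4 : η ≤ 1 / 4 := by
    rw [hηdef]
    apply one_div_le_one_div_of_le (by norm_num)
    have : (1:ℝ) ≤ m := by exact_mod_cast hm0
    linarith
  have hηm : η * m = 1 / 4 := by
    rw [hηdef]; field_simp
  have hdiv0 : ∀ ℓ : ℕ, (0:ℝ) ≤ (ℓ:ℝ) / m := fun ℓ => by positivity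
  have hdiv1 : ∀ ℓ : ℕ, ℓ < m → (ℓ:ℝ) / m ≤ 1 := by
    intro ℓ hℓ
    rw [div_le_one hmR]
    exact_mod_cast le_of_lt hℓ
  set f : ℕ × ℕ → EuclideanSpace ℝ (Fin 2) :=
    fun p => pt2 (cX p.1 + (p.2 : ℝ) / m) (cY p.1 + (p.2 : ℝ) / m) with hf
  refine ⟨(Finset.range i ×ˢ Finset.range m).image f, ?_⟩
  set P := (Finset.range i ×ˢ Finset.range m).image f with hP
  intro N hN
  have hPcard : ((P.card : ℝ)) ≤ (i:ℝ) * m := by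
    have h1 : P.card ≤ i * m := by
      rw [hP]
      refine le_trans Finset.card_image_le ?_
      rw [Finset.card_product, Finset.card_range, Finset.card_range]
    exact_mod_cast h1
  have hf0 : ∀ c ℓ, f (c, ℓ) 0 = cX c + (ℓ:ℝ)/m := fun c ℓ => rfl
  have hf1 : ∀ c ℓ, f (c, ℓ) 1 = cY c + (ℓ:ℝ)/m := fun c ℓ => rfl
  have hfX : ∀ c ℓ, ℓ < m → cX c ≤ f (c,ℓ) 0 ∧ f (c,ℓ) 0 ≤ cX c + 1 ∧
      cY c ≤ f (c,ℓ) 1 ∧ f (c,ℓ) 1 ≤ cY c + 1 := by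
    intro c ℓ hℓ
    rw [hf0, hf1]
    have := hdiv0 ℓ; have := hdiv1 ℓ hℓ
    exact ⟨by linarith, by linarith, by linarith, by linarith⟩
  have hfP : ∀ c ℓ, c < i → ℓ < m → f (c, ℓ) ∈ P := by
    intro c ℓ hc hℓ
    rw [hP]
    exact Finset.mem_image_of_mem f
      (Finset.mem_product.mpr ⟨Finset.mem_range.mpr hc, Finset.mem_range.mpr hℓ⟩)
  have hfinj : ∀ c ℓ ℓ', f (c, ℓ) = f (c, ℓ') → ℓ = ℓ' := by
    intro c ℓ ℓ' hEq
    have h0 : f (c, ℓ) 0 = f (c, ℓ') 0 := by rw [hEq]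
    rw [hf0, hf0] at h0
    have h2 : (ℓ:ℝ)/m = (ℓ':ℝ)/m := by linarith
    field_simp at h2
    exact_mod_cast h2
  have count_split : ∀ w : ℝ,
      m ≤ ((Finset.range m).filter (fun ℓ : ℕ => (ℓ:ℝ)/m ≤ w - η)).card
        + ((Finset.range m).filter (fun ℓ : ℕ => w + η ≤ (ℓ:ℝ)/m)).card + 1 := by
    intro w
    set A := (Finset.range m).filter (fun ℓ : ℕ => (ℓ:ℝ)/m ≤ w - η) with hA
    set B := (Finset.range m).filter (fun ℓ : ℕ => w + η ≤ (ℓ:ℝ)/m) with hB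
    set C := (Finset.range m).filter
      (fun ℓ : ℕ => w - η < (ℓ:ℝ)/m ∧ (ℓ:ℝ)/m < w + η) with hC
    have hsub : Finset.range m ⊆ A ∪ B ∪ C := by
      intro ℓ hℓ
      simp only [hA, hB, hC, Finset.mem_union, Finset.mem_filter]
      rcases le_or_gt ((ℓ:ℝ)/m) (w - η) with h | h
      · exact Or.inl (Or.inl ⟨hℓ, h⟩)
      · rcases le_or_gt (w + η) ((ℓ:ℝ)/m) with h' | h'
        · exact Or.inl (Or.inr ⟨hℓ, h'⟩)
        · exact Or.inr ⟨hℓ, h, h'⟩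
    have hCcard : C.card ≤ 1 := by
      rw [Finset.card_le_one]
      intro a ha b hb
      simp only [hC, Finset.mem_filter] at ha hb
      have ha2 := (div_lt_iff₀ hmR).mp ha.2.2
      have ha1 := (lt_div_iff₀ hmR).mp ha.2.1
      have hb2 := (div_lt_iff₀ hmR).mp hb.2.2
      have hb1 := (lt_div_iff₀ hmR).mp hb.2.1
      have hab : (a:ℝ) < (b:ℝ) + 1 := by nlinarith
      have hba : (b:ℝ) < (a:ℝ) + 1 := by nlinarith
      have h1 : a < b + 1 := by exact_mod_cast hab
      have h2 : b < a + 1 := by exact_mod_cast hba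
      omega
    have hu2 := Finset.card_union_le A B
    calc m = (Finset.range m).card := (Finset.card_range m).symm
      _ ≤ (A ∪ B ∪ C).card := Finset.card_le_card hsub
      _ ≤ (A ∪ B).card + C.card := Finset.card_union_le _ _
      _ ≤ A.card + B.card + 1 := by omega
  by_cases hBall : ∀ c, c < i → ∃ q ∈ N,
      cX c ≤ q 0 ∧ q 0 ≤ cX c + 1 ∧ cY c ≤ q 1 ∧ q 1 ≤ cY c + 1
  · -- one net point per cluster box
    obtain ⟨qd, hqd, _⟩ := hBall 0 (by omega)
    have hB' : ∀ c, ∃ q, q ∈ N ∧ (c < i →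
        (cX c ≤ q 0 ∧ q 0 ≤ cX c + 1 ∧ cY c ≤ q 1 ∧ q 1 ≤ cY c + 1)) := by
      intro c
      by_cases hc : c < i
      · obtain ⟨q, hq1, hq2⟩ := hBall c hc
        exact ⟨q, hq1, fun _ => hq2⟩
      · exact ⟨qd, hqd, fun h => absurd h hc⟩
    choose Q hQN hQX using hB'
    have himg : (Finset.range i).image Q = N := by
      have hsub : (Finset.range i).image Q ⊆ N := by
        intro x hx
        obtain ⟨c, _, rfl⟩ := Finset.mem_image.mp hx
        exact hQN c
      have hinj : Set.InjOn Q ↑(Finset.range i) := by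
        intro c hc c' hc' hEq
        simp only [Finset.coe_range, Set.mem_Iio] at hc hc'
        have hx2 : cX c' ≤ Q c 0 ∧ Q c 0 ≤ cX c' + 1 ∧
            cY c' ≤ Q c 1 ∧ Q c 1 ≤ cY c' + 1 := by
          rw [hEq]; exact hQX c' hc'
        exact boxes_disjoint (hQX c hc) hx2
      have hcard : ((Finset.range i).image Q).card = i := by
        rw [Finset.card_image_of_injOn hinj, Finset.card_range]
      exact Finset.eq_of_subset_of_card_le hsub (by rw [hcard]; exact hN)
    have hmem : ∀ q ∈ N, ∃ cc, cc < i ∧ q = Q cc := by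
      intro q hq
      rw [← himg] at hq
      obtain ⟨cc, hcc, rfl⟩ := Finset.mem_image.mp hq
      exact ⟨cc, Finset.mem_range.mp hcc, rfl⟩
    have h0 := hQX 0 (by omega)
    have h1 := hQX 1 (by omega)
    have h2 := hQX 2 (by omega)
    have h3 := hQX 3 (by omega)
    simp only [cX, cY] at h0 h1 h2 h3
    have cB := count_split (Q 3 0)
    have cR := count_split (Q 0 1)
    have cT := count_split (Q 1 0)
    have cL := count_split (Q 2 1)
    have edge : ∀ (a b c d : ℝ) (u v : ℕ) (pu pv : ℕ → Prop),
        u < i → v < i → u ≠ v →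
        (∀ q ∈ N, ¬(a ≤ q 0 ∧ q 0 ≤ b ∧ c ≤ q 1 ∧ q 1 ≤ d)) →
        (∀ ℓ, ℓ < m → pu ℓ →
          a ≤ f (u,ℓ) 0 ∧ f (u,ℓ) 0 ≤ b ∧ c ≤ f (u,ℓ) 1 ∧ f (u,ℓ) 1 ≤ d) →
        (∀ ℓ, ℓ < m → pv ℓ →
          a ≤ f (v,ℓ) 0 ∧ f (v,ℓ) 0 ≤ b ∧ c ≤ f (v,ℓ) 1 ∧ f (v,ℓ) 1 ≤ d) →
        m ≤ ((Finset.range m).filter pu).card + ((Finset.range m).filter pv).card + 1 →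
        ∃ R : Set (EuclideanSpace ℝ (Fin 2)), IsRect R ∧ (∀ q ∈ N, q ∉ R) ∧
          ε * P.card < ((R ∩ ↑P).ncard : ℝ) := by
      intro a b c d u v pu pv hu hv huv havoid hmu hmv hcnt
      refine ⟨{x | a ≤ x 0 ∧ x 0 ≤ b ∧ c ≤ x 1 ∧ x 1 ≤ d}, ⟨a, b, c, d, rfl⟩,
        fun q hq hqR => havoid q hq hqR, ?_⟩
      set Fu := ((Finset.range m).filter pu).image (fun ℓ => f (u,ℓ)) with hFu
      set Fv := ((Finset.range m).filter pv).image (fun ℓ => f (v,ℓ)) with hFv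
      have hcardu : Fu.card = ((Finset.range m).filter pu).card := by
        rw [hFu]
        exact Finset.card_image_of_injOn (fun ℓ _ ℓ' _ h => hfinj u ℓ ℓ' h)
      have hcardv : Fv.card = ((Finset.range m).filter pv).card := by
        rw [hFv]
        exact Finset.card_image_of_injOn (fun ℓ _ ℓ' _ h => hfinj v ℓ ℓ' h)
      have hdisj : Disjoint Fu Fv := by
        rw [Finset.disjoint_left]
        intro x hxu hxv
        simp only [hFu, hFv, Finset.mem_image, Finset.mem_filter,
          Finset.mem_range] at hxu hxv
        obtain ⟨ℓ, ⟨hℓ, _⟩, rfl⟩ := hxu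
        obtain ⟨ℓ', ⟨hℓ', _⟩, hEq⟩ := hxv
        have hx2 : cX v ≤ f (u,ℓ) 0 ∧ f (u,ℓ) 0 ≤ cX v + 1 ∧
            cY v ≤ f (u,ℓ) 1 ∧ f (u,ℓ) 1 ≤ cY v + 1 := by
          rw [← hEq]; exact hfX v ℓ' hℓ'
        exact huv (boxes_disjoint (hfX u ℓ hℓ) hx2)
      have hsubset : ↑(Fu ∪ Fv) ⊆
          ({x : EuclideanSpace ℝ (Fin 2) | a ≤ x 0 ∧ x 0 ≤ b ∧ c ≤ x 1 ∧ x 1 ≤ d}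
            ∩ (↑P : Set (EuclideanSpace ℝ (Fin 2)))) := by
        intro x hx
        simp only [Finset.coe_union, Set.mem_union, Finset.mem_coe, hFu, hFv,
          Finset.mem_image, Finset.mem_filter, Finset.mem_range] at hx
        rcases hx with ⟨ℓ, ⟨hℓ, hp⟩, rfl⟩ | ⟨ℓ, ⟨hℓ, hp⟩, rfl⟩
        · exact ⟨hmu ℓ hℓ hp, hfP u ℓ hu hℓ⟩
        · exact ⟨hmv ℓ hℓ hp, hfP v ℓ hv hℓ⟩
      have hfin : (({x : EuclideanSpace ℝ (Fin 2) |
          a ≤ x 0 ∧ x 0 ≤ b ∧ c ≤ x 1 ∧ x 1 ≤ d}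
            ∩ (↑P : Set (EuclideanSpace ℝ (Fin 2))))).Finite :=
        Set.Finite.inter_of_right P.finite_toSet _
      have hnc : Fu.card + Fv.card ≤
          (({x : EuclideanSpace ℝ (Fin 2) | a ≤ x 0 ∧ x 0 ≤ b ∧ c ≤ x 1 ∧ x 1 ≤ d}
            ∩ (↑P : Set (EuclideanSpace ℝ (Fin 2))))).ncard := by
        rw [← Finset.card_union_of_disjoint hdisj, ← Set.ncard_coe_finset]
        exact Set.ncard_le_ncard hsubset hfin
      have hmn : m ≤ (({x : EuclideanSpace ℝ (Fin 2) |
          a ≤ x 0 ∧ x 0 ≤ b ∧ c ≤ x 1 ∧ x 1 ≤ d}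
            ∩ (↑P : Set (EuclideanSpace ℝ (Fin 2))))).ncard + 1 := by
        calc m ≤ ((Finset.range m).filter pu).card
              + ((Finset.range m).filter pv).card + 1 := hcnt
          _ = Fu.card + Fv.card + 1 := by rw [hcardu, hcardv]
          _ ≤ _ + 1 := Nat.add_le_add_right hnc 1
      have hmnR : (m:ℝ) ≤ ((({x : EuclideanSpace ℝ (Fin 2) |
          a ≤ x 0 ∧ x 0 ≤ b ∧ c ≤ x 1 ∧ x 1 ≤ d}
            ∩ (↑P : Set (EuclideanSpace ℝ (Fin 2))))).ncard : ℝ) + 1 := by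
        exact_mod_cast hmn
      calc ε * P.card ≤ ε * ((i:ℝ) * m) := mul_le_mul_of_nonneg_left hPcard hε0
        _ < (m:ℝ) - 1 := hkey
        _ ≤ _ := by linarith
    have main : m ≤ ((Finset.range m).filter (fun ℓ : ℕ => Q 3 0 + η ≤ (ℓ:ℝ)/m)).card
          + ((Finset.range m).filter (fun ℓ : ℕ => (ℓ:ℝ)/m ≤ Q 0 1 - η)).card + 1
        ∨ m ≤ ((Finset.range m).filter (fun ℓ : ℕ => Q 0 1 + η ≤ (ℓ:ℝ)/m)).card
          + ((Finset.range m).filter (fun ℓ : ℕ => Q 1 0 + η ≤ (ℓ:ℝ)/m)).card + 1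
        ∨ m ≤ ((Finset.range m).filter (fun ℓ : ℕ => (ℓ:ℝ)/m ≤ Q 1 0 - η)).card
          + ((Finset.range m).filter (fun ℓ : ℕ => Q 2 1 + η ≤ (ℓ:ℝ)/m)).card + 1
        ∨ m ≤ ((Finset.range m).filter (fun ℓ : ℕ => (ℓ:ℝ)/m ≤ Q 2 1 - η)).card
          + ((Finset.range m).filter (fun ℓ : ℕ => (ℓ:ℝ)/m ≤ Q 3 0 - η)).card + 1 := by
      omega
    rcases main with hE | hE | hE | hE
    · -- E1 : bottom-suffix + right-prefix
      refine edge (Q 3 0 + η) 11 (-11) (Q 0 1 - η) 3 0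
        (fun ℓ : ℕ => Q 3 0 + η ≤ (ℓ:ℝ)/m) (fun ℓ : ℕ => (ℓ:ℝ)/m ≤ Q 0 1 - η)
        (by omega) (by omega) (by omega) ?_ ?_ ?_ hE
      · intro q hq hqR
        obtain ⟨cc, hcc, rfl⟩ := hmem q hq
        have hbox := hQX cc hcc
        obtain ⟨r1, r2, r3, r4⟩ := hqR
        rcases cc with _|_|_|_|n <;> simp only [cX, cY] at hbox
        · linarith [hbox.2.2.2]
        · linarith [hbox.2.2.1, h0.2.2.2]
        · linarith [hbox.2.1, h3.1]
        · linarith [hbox.2.1]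
        · have hn0 : (0:ℝ) ≤ (n:ℝ) := Nat.cast_nonneg n
          linarith [hbox.2.1, h3.1]
      · intro ℓ hℓ hp
        rw [hf0, hf1]
        simp only [cX, cY]
        have d0 := hdiv0 ℓ; have d1 := hdiv1 ℓ hℓ
        exact ⟨by linarith, by linarith, by linarith, by linarith [h0.2.2.1]⟩
      · intro ℓ hℓ hp
        rw [hf0, hf1]
        simp only [cX, cY]
        have d0 := hdiv0 ℓ; have d1 := hdiv1 ℓ hℓ
        exact ⟨by linarith [h3.2.1], by linarith, by linarith, by linarith⟩
    · -- E2 : right-suffix + top-suffix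
      refine edge (Q 1 0 + η) 11 (Q 0 1 + η) 11 0 1
        (fun ℓ : ℕ => Q 0 1 + η ≤ (ℓ:ℝ)/m) (fun ℓ : ℕ => Q 1 0 + η ≤ (ℓ:ℝ)/m)
        (by omega) (by omega) (by omega) ?_ ?_ ?_ hE
      · intro q hq hqR
        obtain ⟨cc, hcc, rfl⟩ := hmem q hq
        have hbox := hQX cc hcc
        obtain ⟨r1, r2, r3, r4⟩ := hqR
        rcases cc with _|_|_|_|n <;> simp only [cX, cY] at hbox
        · linarith [hbox.2.2.1]
        · linarith [hbox.1]
        · linarith [hbox.2.1, h1.1]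
        · linarith [hbox.2.2.2, h0.2.2.1]
        · have hn0 : (0:ℝ) ≤ (n:ℝ) := Nat.cast_nonneg n
          linarith [hbox.2.1, h1.1]
      · intro ℓ hℓ hp
        rw [hf0, hf1]
        simp only [cX, cY]
        have d0 := hdiv0 ℓ; have d1 := hdiv1 ℓ hℓ
        exact ⟨by linarith [h1.2.1], by linarith, by linarith, by linarith⟩
      · intro ℓ hℓ hp
        rw [hf0, hf1]
        simp only [cX, cY]
        have d0 := hdiv0 ℓ; have d1 := hdiv1 ℓ hℓ
        exact ⟨by linarith, by linarith, by linarith [h0.2.2.2], by linarith⟩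
    · -- E3 : top-prefix + left-suffix
      refine edge (-11) (Q 1 0 - η) (Q 2 1 + η) 11 1 2
        (fun ℓ : ℕ => (ℓ:ℝ)/m ≤ Q 1 0 - η) (fun ℓ : ℕ => Q 2 1 + η ≤ (ℓ:ℝ)/m)
        (by omega) (by omega) (by omega) ?_ ?_ ?_ hE
      · intro q hq hqR
        obtain ⟨cc, hcc, rfl⟩ := hmem q hq
        have hbox := hQX cc hcc
        obtain ⟨r1, r2, r3, r4⟩ := hqR
        rcases cc with _|_|_|_|n <;> simp only [cX, cY] at hbox
        · linarith [hbox.1, h1.2.1]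
        · linarith [hbox.2.1]
        · linarith [hbox.2.2.2]
        · linarith [hbox.2.2.2, h2.2.2.1]
        · have hn0 : (0:ℝ) ≤ (n:ℝ) := Nat.cast_nonneg n
          linarith [hbox.2.1]
      · intro ℓ hℓ hp
        rw [hf0, hf1]
        simp only [cX, cY]
        have d0 := hdiv0 ℓ; have d1 := hdiv1 ℓ hℓ
        exact ⟨by linarith, by linarith, by linarith [h2.2.2.2], by linarith⟩
      · intro ℓ hℓ hp
        rw [hf0, hf1]
        simp only [cX, cY]
        have d0 := hdiv0 ℓ; have d1 := hdiv1 ℓ hℓ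
        exact ⟨by linarith, by linarith [h1.1], by linarith, by linarith⟩
    · -- E4 : left-prefix + bottom-prefix
      refine edge (-11) (Q 3 0 - η) (-11) (Q 2 1 - η) 2 3
        (fun ℓ : ℕ => (ℓ:ℝ)/m ≤ Q 2 1 - η) (fun ℓ : ℕ => (ℓ:ℝ)/m ≤ Q 3 0 - η)
        (by omega) (by omega) (by omega) ?_ ?_ ?_ hE
      · intro q hq hqR
        obtain ⟨cc, hcc, rfl⟩ := hmem q hq
        have hbox := hQX cc hcc
        obtain ⟨r1, r2, r3, r4⟩ := hqR
        rcases cc with _|_|_|_|n <;> simp only [cX, cY] at hbox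
        · linarith [hbox.1, h3.2.1]
        · linarith [hbox.2.2.1, h2.2.2.2]
        · linarith [hbox.2.2.2]
        · linarith [hbox.2.1]
        · have hn0 : (0:ℝ) ≤ (n:ℝ) := Nat.cast_nonneg n
          linarith [hbox.2.1]
      · intro ℓ hℓ hp
        rw [hf0, hf1]
        simp only [cX, cY]
        have d0 := hdiv0 ℓ; have d1 := hdiv1 ℓ hℓ
        exact ⟨by linarith, by linarith [h3.1], by linarith, by linarith⟩
      · intro ℓ hℓ hp
        rw [hf0, hf1]
        simp only [cX, cY]
        have d0 := hdiv0 ℓ; have d1 := hdiv1 ℓ hℓ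
        exact ⟨by linarith, by linarith, by linarith, by linarith [h2.2.2.1]⟩
  · -- some cluster box is free of N
    push_neg at hBall
    obtain ⟨c, hc, hfree⟩ := hBall
    refine ⟨{x | cX c ≤ x 0 ∧ x 0 ≤ cX c + 1 ∧ cY c ≤ x 1 ∧ x 1 ≤ cY c + 1},
      ⟨cX c, cX c + 1, cY c, cY c + 1, rfl⟩,
      fun q hq hqR => absurd (hfree q hq hqR.1 hqR.2.1 hqR.2.2.1) (not_lt.mpr hqR.2.2.2), ?_⟩
    set F := (Finset.range m).image (fun ℓ => f (c, ℓ)) with hF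
    have hFcard : F.card = m := by
      rw [hF, Finset.card_image_of_injOn (fun ℓ _ ℓ' _ h => hfinj c ℓ ℓ' h),
        Finset.card_range]
    have hsubset : ↑F ⊆
        ({x : EuclideanSpace ℝ (Fin 2) |
          cX c ≤ x 0 ∧ x 0 ≤ cX c + 1 ∧ cY c ≤ x 1 ∧ x 1 ≤ cY c + 1}
          ∩ (↑P : Set (EuclideanSpace ℝ (Fin 2)))) := by
      intro x hx
      simp only [hF, Finset.coe_image, Set.mem_image, Finset.mem_coe,
        Finset.mem_range] at hx
      obtain ⟨ℓ, hℓ, rfl⟩ := hx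
      exact ⟨hfX c ℓ hℓ, hfP c ℓ hc hℓ⟩
    have hfin : (({x : EuclideanSpace ℝ (Fin 2) |
        cX c ≤ x 0 ∧ x 0 ≤ cX c + 1 ∧ cY c ≤ x 1 ∧ x 1 ≤ cY c + 1}
          ∩ (↑P : Set (EuclideanSpace ℝ (Fin 2))))).Finite :=
      Set.Finite.inter_of_right P.finite_toSet _
    have hnc : m ≤ (({x : EuclideanSpace ℝ (Fin 2) |
        cX c ≤ x 0 ∧ x 0 ≤ cX c + 1 ∧ cY c ≤ x 1 ∧ x 1 ≤ cY c + 1}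
          ∩ (↑P : Set (EuclideanSpace ℝ (Fin 2))))).ncard := by
      rw [← hFcard, ← Set.ncard_coe_finset]
      exact Set.ncard_le_ncard hsubset hfin
    have hncR : (m:ℝ) ≤ ((({x : EuclideanSpace ℝ (Fin 2) |
        cX c ≤ x 0 ∧ x 0 ≤ cX c + 1 ∧ cY c ≤ x 1 ∧ x 1 ≤ cY c + 1}
          ∩ (↑P : Set (EuclideanSpace ℝ (Fin 2))))).ncard : ℝ) := by
      exact_mod_cast hnc
    calc ε * P.card ≤ ε * ((i:ℝ) * m) := mul_le_mul_of_nonneg_left hPcard hε0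
      _ < (m:ℝ) - 1 := hkey
      _ ≤ _ := by linarith
end
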